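/- arXiv:0803.2068 — 5 statements merged into one kernel-verified Lean document; each statement's English description precedes it below -/
import Mathlib

section
/- If 0 ≤ h₁ < h₂ ≤ m and x₊(h₁) = x₊(h₂) = x, then x > 0 and the distribution of X has an atom at x, i.e. P(X = x) > 0. -/
open MeasureTheory ProbabilityTheory Set Function

noncomputable section

/-- Truncated first-moment function `G`. -/
def G (μ : Measure ℝ) (x : ℝ) : ℝ :=
  if 0 ≤ x then ∫ z in Set.Ioc (0:ℝ) x, z ∂μ else ∫ z in Set.Ico x 0, -z ∂μ

/-- `m = E X⁺`. -/
def mTot (μ : Measure ℝ) : ℝ := ∫ z in Set.Ioi (0:ℝ), z ∂μ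

/-- Extension of `G` to `[-∞,∞]`. -/
def Gbar (μ : Measure ℝ) (x : EReal) : ℝ :=
  if x = ⊤ then ∫ z in Set.Ioi (0:ℝ), z ∂μ
  else if x = ⊥ then ∫ z in Set.Iio (0:ℝ), -z ∂μ
  else G μ x.toReal

/-- Positive generalized inverse `x₊`. -/
def xPlus (μ : Measure ℝ) (h : ℝ) : EReal := sInf {x : EReal | 0 ≤ x ∧ Gbar μ x ≥ h}

/-- Negative generalized inverse `x₋`. -/
def xMinus (μ : Measure ℝ) (h : ℝ) : EReal := sSup {x : EReal | x ≤ 0 ∧ Gbar μ x ≥ h}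

/-- Randomized version `G̃` of `G`. -/
def Gtilde (μ : Measure ℝ) (x u : ℝ) : ℝ :=
  if 0 ≤ x then Function.leftLim (G μ) x + (G μ x - Function.leftLim (G μ) x) * u
  else Function.rightLim (G μ) x + (G μ x - Function.rightLim (G μ) x) * u

/-- The reciprocating function `r`. -/
def recip (μ : Measure ℝ) (x u : ℝ) : EReal :=
  if 0 ≤ x then xMinus μ (Gtilde μ x u) else xPlus μ (Gtilde μ x u)

/-- The regularizing function `x̂`. -/
def xhat (μ : Measure ℝ) (x u : ℝ) : EReal :=
  if 0 ≤ x then xPlus μ (Gtilde μ x u) else xMinus μ (Gtilde μ x u)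

/-- Support of a measure on ℝ. -/
def measSupport (μ : Measure ℝ) : Set ℝ :=
  {y : ℝ | ∀ O : Set ℝ, IsOpen O → y ∈ O → 0 < μ O}

/-- `E g(X_{a,b}, R_{a,b})` for the zero-mean distribution on `{a,b}` (with `a*b ≤ 0`). -/
def twoE (g : ℝ → ℝ → ℝ) (a b : ℝ) : ℝ :=
  if a * b < 0 then (b / (b - a)) * g a b + (a / (a - b)) * g b a else g 0 0

/-- `E g(X_{a,b})` for the zero-mean distribution on `{a,b}` (with `a*b ≤ 0`). -/
def oneE (g : ℝ → ℝ) (a b : ℝ) : ℝ :=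
  if a * b < 0 then (b / (b - a)) * g a + (a / (a - b)) * g b else g 0


open Filter in
private lemma G_mono_aux (μ : Measure ℝ) (hint : Integrable (id : ℝ → ℝ) μ) {a b : ℝ}
    (ha : 0 ≤ a) (hab : a ≤ b) : G μ a ≤ G μ b := by
  have hb : 0 ≤ b := ha.trans hab
  simp only [G, if_pos ha, if_pos hb]
  apply setIntegral_mono_set hint.integrableOn
  · exact ae_restrict_of_forall_mem measurableSet_Ioc (fun z hz => le_of_lt hz.1)
  · exact HasSubset.Subset.eventuallyLE (Set.Ioc_subset_Ioc_right hab)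

open Filter in
private lemma right_bound_aux (μ : Measure ℝ) (hint : Integrable (id : ℝ → ℝ) μ)
    (x h₂ : ℝ) (hx0 : 0 ≤ x) (key2 : ∀ y : ℝ, x < y → h₂ ≤ G μ y) :
    h₂ ≤ ∫ z in Set.Ioc (0:ℝ) x, z ∂μ := by
  set s : ℕ → Set ℝ := fun n => Set.Ioc (0:ℝ) (x + 1/(n+1)) with hs
  have hanti : Antitone s := by
    intro n m hnm
    apply Set.Ioc_subset_Ioc_right
    have hnm' : (n:ℝ) ≤ m := by exact_mod_cast hnm
    have : (1:ℝ)/(m+1) ≤ 1/(n+1) :=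
      one_div_le_one_div_of_le (by positivity) (by linarith)
    linarith
  have hiInter : ⋂ n, s n = Set.Ioc (0:ℝ) x := by
    ext z
    simp only [Set.mem_iInter, Set.mem_Ioc, hs]
    constructor
    · rintro h
      refine ⟨(h 0).1, ?_⟩
      by_contra hzx
      push_neg at hzx
      obtain ⟨n, hn⟩ := exists_nat_one_div_lt (sub_pos.mpr hzx)
      have := (h n).2
      linarith
    · rintro ⟨h1, h2⟩ n
      have : (0:ℝ) < 1/(n+1) := by positivity
      exact ⟨h1, by linarith⟩
  have htend := tendsto_setIntegral_of_antitone (f := fun z : ℝ => z) (μ := μ)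
    (fun n => measurableSet_Ioc) hanti ⟨0, hint.integrableOn⟩
  rw [hiInter] at htend
  refine ge_of_tendsto' htend (fun n => ?_)
  have hlt : x < x + 1/(n+1) := by
    have : (0:ℝ) < 1/(n+1) := by positivity
    linarith
  have := key2 _ hlt
  rwa [G, if_pos (by linarith : (0:ℝ) ≤ x + 1/(n+1))] at this

open Filter in
private lemma left_bound_aux (μ : Measure ℝ) (hint : Integrable (id : ℝ → ℝ) μ)
    (x h₁ : ℝ) (h0 : 0 ≤ h₁) (key1 : ∀ y : ℝ, 0 ≤ y → y < x → G μ y < h₁) :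
    ∫ z in Set.Ioo (0:ℝ) x, z ∂μ ≤ h₁ := by
  set s : ℕ → Set ℝ := fun n => Set.Ioc (0:ℝ) (x - 1/(n+1)) with hs
  have hmono : Monotone s := by
    intro n m hnm
    apply Set.Ioc_subset_Ioc_right
    have hnm' : (n:ℝ) ≤ m := by exact_mod_cast hnm
    have : (1:ℝ)/(m+1) ≤ 1/(n+1) :=
      one_div_le_one_div_of_le (by positivity) (by linarith)
    linarith
  have hiUnion : ⋃ n, s n = Set.Ioo (0:ℝ) x := by
    ext z
    simp only [Set.mem_iUnion, Set.mem_Ioc, Set.mem_Ioo, hs]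
    constructor
    · rintro ⟨n, h1, h2⟩
      have : (0:ℝ) < 1/(n+1) := by positivity
      exact ⟨h1, by linarith⟩
    · rintro ⟨h1, h2⟩
      obtain ⟨n, hn⟩ := exists_nat_one_div_lt (sub_pos.mpr h2)
      exact ⟨n, h1, by linarith⟩
  have htend := tendsto_setIntegral_of_monotone (f := fun z : ℝ => z) (μ := μ)
    (fun n => measurableSet_Ioc) hmono (by rw [hiUnion]; exact hint.integrableOn)
  rw [hiUnion] at htend
  refine le_of_tendsto' htend (fun n => ?_)
  rcases le_or_gt 0 (x - 1/(n+1)) with hy | hy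
  · have hlt : x - 1/(n+1) < x := by
      have : (0:ℝ) < 1/(n+1) := by positivity
      linarith
    have := key1 _ hy hlt
    rw [G, if_pos hy] at this
    exact this.le
  · rw [Set.Ioc_eq_empty (fun h => absurd (lt_trans hy h) (by simp))]
    simpa using h0

/-- If `x₊` takes the same value at two distinct levels, that value is a strictly positive
atom of `μ`. -/
theorem xPlus_constancy_implies_atom (μ : Measure ℝ) [IsProbabilityMeasure μ]
    (hint : Integrable (id : ℝ → ℝ) μ) (hmean : ∫ x, x ∂μ = 0)
    (h₁ h₂ x : ℝ) (h0 : 0 ≤ h₁) (h12 : h₁ < h₂) (h2m : h₂ ≤ mTot μ)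
    (e1 : xPlus μ h₁ = (x : EReal)) (e2 : xPlus μ h₂ = (x : EReal)) :
    0 < x ∧ 0 < μ {x} := by
  -- x is nonnegative
  have hx0 : (0:ℝ) ≤ x := by
    have : (0:EReal) ≤ (x:EReal) := by
      rw [← e2, xPlus]
      exact le_sInf (fun z hz => hz.1)
    exact_mod_cast this
  -- for every y > x we have h₂ ≤ G μ y
  have key2 : ∀ y : ℝ, x < y → h₂ ≤ G μ y := by
    intro y hy
    have hlt : xPlus μ h₂ < (y:EReal) := by
      rw [e2]; exact_mod_cast hy
    rw [xPlus] at hlt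
    obtain ⟨z, hz, hzy⟩ := sInf_lt_iff.mp hlt
    have hzt : z ≠ ⊤ := (hzy.trans (EReal.coe_lt_top y)).ne
    have hzb : z ≠ ⊥ := by
      intro h; rw [h] at hz
      exact absurd hz.1 (by simp)
    have hzr : (z.toReal : EReal) = z := EReal.coe_toReal hzt hzb
    have hz0 : (0:ℝ) ≤ z.toReal := by
      have := hz.1; rw [← hzr] at this; exact_mod_cast this
    have hzy' : z.toReal ≤ y := by
      rw [← hzr] at hzy; exact_mod_cast hzy.le
    have hGz : G μ z.toReal ≥ h₂ := by
      have := hz.2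
      rwa [Gbar, if_neg hzt, if_neg hzb] at this
    exact le_trans hGz (G_mono_aux μ hint hz0 hzy')
  -- for every 0 ≤ y < x we have G μ y < h₁
  have key1 : ∀ y : ℝ, 0 ≤ y → y < x → G μ y < h₁ := by
    intro y hy0 hyx
    by_contra hcon
    push_neg at hcon
    have hmem : (y:EReal) ∈ {z : EReal | 0 ≤ z ∧ Gbar μ z ≥ h₁} := by
      refine ⟨by exact_mod_cast hy0, ?_⟩
      rw [Gbar, if_neg (EReal.coe_ne_top y), if_neg (EReal.coe_ne_bot y)]
      simpa using hcon
    have : xPlus μ h₁ ≤ (y:EReal) := sInf_le hmem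
    rw [e1] at this
    exact absurd hyx (not_lt.mpr (by exact_mod_cast this))
  have hE : h₂ ≤ ∫ z in Set.Ioc (0:ℝ) x, z ∂μ := right_bound_aux μ hint x h₂ hx0 key2
  have hF : ∫ z in Set.Ioo (0:ℝ) x, z ∂μ ≤ h₁ := left_bound_aux μ hint x h₁ h0 key1
  -- x must be positive
  have hxpos : 0 < x := by
    rcases hx0.lt_or_eq with h | h
    · exact h
    · exfalso
      rw [← h] at hE
      simp only [Set.Ioc_self, Measure.restrict_empty, integral_zero_measure] at hE
      linarith
  -- split the integral at the atom
  have hsplit : ∫ z in Set.Ioc (0:ℝ) x, z ∂μ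
      = (∫ z in Set.Ioo (0:ℝ) x, z ∂μ) + ∫ z in ({x} : Set ℝ), z ∂μ := by
    rw [← Set.Ioo_union_right hxpos]
    exact setIntegral_union (by simp) (measurableSet_singleton x)
      hint.integrableOn hint.integrableOn
  have hsing : ∫ z in ({x} : Set ℝ), z ∂μ = (μ {x}).toReal * x := by
    rw [Measure.restrict_singleton, integral_smul_measure, integral_dirac]
    simp [smul_eq_mul]
  have hkey : h₂ - h₁ ≤ (μ {x}).toReal * x := by
    rw [hsplit, hsing] at hE
    linarith
  have hμfin : μ {x} ≠ ⊤ := measure_ne_top μ _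
  have hμpos : 0 < (μ {x}).toReal := by
    by_contra hcon
    push_neg at hcon
    nlinarith
  exact ⟨hxpos, (ENNReal.toReal_pos_iff.mp hμpos).1⟩
end
end

section
/- Let X be a zero-mean random variable, U an independent uniform random variable on [0,1], and G̃ the randomized truncated-moment function defined by G̃(x,u) = G(x−) + (G(x) − G(x−))u for x ≥ 0 and G̃(x,u) = G(x+) + (G(x) − G(x+))u for x ≤ 0. Then for every h ∈ [0,m], E[X·1{X > 0, G̃(X,U) ≤ h}] = h and E[(−X)·1{X < 0, G̃(X,U) ≤ h}] = h, where m = E X⁺. -/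
open MeasureTheory ProbabilityTheory Set Function

noncomputable section

open Filter Topology



lemma gmono (ν : Measure ℝ) [IsFiniteMeasure ν] : Monotone (fun x => (ν (Iic x)).toReal) :=
  fun _ _ hab => ENNReal.toReal_mono (measure_ne_top _ _) (measure_mono (Iic_subset_Iic.2 hab))

lemma seq_lt (x : ℝ) : Tendsto (fun n : ℕ => x - 1/(n+1)) atTop (𝓝[<] x) := by
  apply tendsto_nhdsWithin_of_tendsto_nhds_of_eventually_within
  · have : Tendsto (fun n : ℕ => 1/((n:ℝ)+1)) atTop (𝓝 0) := tendsto_one_div_add_atTop_nhds_zero_nat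
    simpa using tendsto_const_nhds.sub this
  · filter_upwards with n
    have : (0:ℝ) < 1/((n:ℝ)+1) := by positivity
    simp [mem_Iio]; linarith

lemma leftLim_g (ν : Measure ℝ) [IsFiniteMeasure ν] (x : ℝ) :
    leftLim (fun x => (ν (Iic x)).toReal) x = (ν (Iio x)).toReal := by
  have hne : 𝓝[<] x ≠ ⊥ := (nhdsLT_neBot x).ne'
  have hmono := gmono ν
  have h1 : Tendsto (fun x => (ν (Iic x)).toReal) (𝓝[<] x)
      (𝓝 (leftLim (fun x => (ν (Iic x)).toReal) x)) := hmono.tendsto_leftLim x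
  have hseq := seq_lt x
  have h2 : Tendsto (fun n : ℕ => (ν (Iic (x - 1/(n+1)))).toReal) atTop
      (𝓝 (ν (Iio x)).toReal) := by
    have hu : (⋃ n : ℕ, Iic (x - 1/(n+1))) = Iio x := by
      ext y; simp only [mem_iUnion, mem_Iic, mem_Iio]
      constructor
      · rintro ⟨n, hn⟩
        have : (0:ℝ) < 1/((n:ℝ)+1) := by positivity
        linarith
      · intro hy
        obtain ⟨n, hn⟩ := exists_nat_one_div_lt (show (0:ℝ) < x - y by linarith)
        exact ⟨n, by linarith⟩
    have hm : Monotone (fun n : ℕ => Iic (x - 1/(n+1))) := by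
      intro a b hab
      apply Iic_subset_Iic.2
      have hab' : (a:ℝ) ≤ b := Nat.cast_le.2 hab
      have : 1/((b:ℝ)+1) ≤ 1/((a:ℝ)+1) := by
        apply one_div_le_one_div_of_le (by positivity)
        linarith
      linarith
    have := tendsto_measure_iUnion_atTop (μ := ν) hm
    rw [hu] at this
    exact (ENNReal.tendsto_toReal (measure_ne_top _ _)).comp this
  exact tendsto_nhds_unique h2 (h1.comp hseq) |>.symm

lemma tendsto_g_Iio (ν : Measure ℝ) [IsFiniteMeasure ν] (x : ℝ) :
    Tendsto (fun n : ℕ => (ν (Iic (x - 1/(n+1)))).toReal) atTop (𝓝 (ν (Iio x)).toReal) := by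
  have hu : (⋃ n : ℕ, Iic (x - 1/(n+1))) = Iio x := by
    ext y; simp only [mem_iUnion, mem_Iic, mem_Iio]
    constructor
    · rintro ⟨n, hn⟩
      have : (0:ℝ) < 1/((n:ℝ)+1) := by positivity
      linarith
    · intro hy
      obtain ⟨n, hn⟩ := exists_nat_one_div_lt (show (0:ℝ) < x - y by linarith)
      exact ⟨n, by linarith⟩
  have hm : Monotone (fun n : ℕ => Iic (x - 1/(n+1))) := by
    intro a b hab
    apply Iic_subset_Iic.2
    have hab' : (a:ℝ) ≤ b := Nat.cast_le.2 hab
    have : 1/((b:ℝ)+1) ≤ 1/((a:ℝ)+1) := by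
      apply one_div_le_one_div_of_le (by positivity)
      linarith
    linarith
  have := tendsto_measure_iUnion_atTop (μ := ν) hm
  rw [hu] at this
  exact (ENNReal.tendsto_toReal (measure_ne_top _ _)).comp this

lemma tendsto_g_Iic (ν : Measure ℝ) [IsFiniteMeasure ν] (x : ℝ) :
    Tendsto (fun n : ℕ => (ν (Iic (x + 1/(n+1)))).toReal) atTop (𝓝 (ν (Iic x)).toReal) := by
  have hu : (⋂ n : ℕ, Iic (x + 1/(n+1))) = Iic x := by
    ext y; simp only [mem_iInter, mem_Iic]
    constructor
    · intro hy
      by_contra hxy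
      push_neg at hxy
      obtain ⟨n, hn⟩ := exists_nat_one_div_lt (show (0:ℝ) < y - x by linarith)
      have := hy n
      linarith
    · intro hy n
      have : (0:ℝ) < 1/((n:ℝ)+1) := by positivity
      linarith
  have hm : Antitone (fun n : ℕ => Iic (x + 1/(n+1))) := by
    intro a b hab
    apply Iic_subset_Iic.2
    have hab' : (a:ℝ) ≤ b := Nat.cast_le.2 hab
    have : 1/((b:ℝ)+1) ≤ 1/((a:ℝ)+1) := by
      apply one_div_le_one_div_of_le (by positivity)
      linarith
    linarith
  have := tendsto_measure_iInter_atTop (μ := ν)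
    (fun n => (measurableSet_Iic).nullMeasurableSet) hm ⟨0, measure_ne_top _ _⟩
  rw [hu] at this
  exact (ENNReal.tendsto_toReal (measure_ne_top _ _)).comp this

lemma tendsto_g_univ (ν : Measure ℝ) [IsFiniteMeasure ν] :
    Tendsto (fun n : ℕ => (ν (Iic (n:ℝ))).toReal) atTop (𝓝 (ν univ).toReal) := by
  have hu : (⋃ n : ℕ, Iic ((n:ℝ))) = univ := by
    ext y; simp only [mem_iUnion, mem_Iic, mem_univ, iff_true]
    obtain ⟨n, hn⟩ := exists_nat_ge y
    exact ⟨n, hn⟩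
  have hm : Monotone (fun n : ℕ => Iic ((n:ℝ))) := fun a b hab =>
    Iic_subset_Iic.2 (Nat.cast_le.2 hab)
  have := tendsto_measure_iUnion_atTop (μ := ν) hm
  rw [hu] at this
  exact (ENNReal.tendsto_toReal (measure_ne_top _ _)).comp this

/-- Core scalar lemma: the distributional-transform identity for a finite measure on `(0,∞)`. -/
lemma core (ν : Measure ℝ) [IsFiniteMeasure ν] (hν0 : ν (Iic 0) = 0)
    {h : ℝ} (hh0 : 0 ≤ h) (hhm : h ≤ (ν univ).toReal) :
    ∫ x, (if (ν (Iic x)).toReal ≤ h then (1:ℝ) else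
      if (ν (Iio x)).toReal ≤ h then
        (h - (ν (Iio x)).toReal) / ((ν (Iic x)).toReal - (ν (Iio x)).toReal) else 0) ∂ν = h := by
  set g : ℝ → ℝ := fun x => (ν (Iic x)).toReal with hg
  set gl : ℝ → ℝ := fun x => (ν (Iio x)).toReal with hgl
  have hmono : Monotone g := gmono ν
  have hgl_le : ∀ x, gl x ≤ g x := fun x =>
    ENNReal.toReal_mono (measure_ne_top _ _) (measure_mono Iio_subset_Iic_self)
  have hlt_le : ∀ x y : ℝ, x < y → g x ≤ gl y := fun x y hxy =>
    ENNReal.toReal_mono (measure_ne_top _ _) (measure_mono (fun z hz => lt_of_le_of_lt hz hxy))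
  have hg0 : ∀ x ≤ 0, g x = 0 := by
    intro x hx
    have : ν (Iic x) = 0 := measure_mono_null (Iic_subset_Iic.2 hx) hν0
    simp [hg, this]
  have hAmeas : MeasurableSet {x | g x ≤ h} := by
    have : Measurable g := hmono.measurable
    exact this measurableSet_Iic
  set A := {x | g x ≤ h} with hA
  set B := {x | gl x ≤ h ∧ h < g x} with hB
  -- B has at most one element
  have hBsub : B.Subsingleton := by
    intro a ha b hb
    by_contra hne
    rcases lt_or_gt_of_ne hne with hab | hab
    · exact absurd ((hb.1.trans_lt hb.2).trans_le (le_refl _))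
        (by have := (hlt_le a b hab); have := ha.2; have := hb.1; linarith)
    · have := hlt_le b a hab; have := hb.2; have := ha.1; linarith
  rcases hBsub.eq_empty_or_singleton with hBe | ⟨c, hBc⟩
  · -- B = ∅ : integrand is indicator of A
    have hφ : ∀ x, (if g x ≤ h then (1:ℝ) else
        if gl x ≤ h then (h - gl x) / (g x - gl x) else 0) = A.indicator (fun _ => (1:ℝ)) x := by
      intro x
      by_cases h1 : g x ≤ h
      · simp [hA, h1]
      · have hx_notB : x ∉ B := by rw [hBe]; exact notMem_empty x
        have h2 : ¬ gl x ≤ h := by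
          intro h2; exact hx_notB ⟨h2, lt_of_not_ge h1⟩
        simp [hA, h1, h2]
    rw [integral_congr_ae (Eventually.of_forall hφ), integral_indicator_const _ hAmeas]
    simp only [smul_eq_mul, mul_one]
    -- now show (ν A).toReal = h
    by_cases hall : ∀ x, g x ≤ h
    · have hAuniv : A = univ := eq_univ_of_forall hall
      have hm_le : (ν univ).toReal ≤ h :=
        le_of_tendsto (tendsto_g_univ ν) (Eventually.of_forall (fun n => hall n))
      rw [hAuniv]
      exact le_antisymm hm_le hhm
    · push_neg at hall
      obtain ⟨z, hz⟩ := hall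
      set S := {x : ℝ | h < g x} with hS
      have hSne : S.Nonempty := ⟨z, hz⟩
      have hSbdd : BddBelow S := by
        refine ⟨0, fun x hx => ?_⟩
        by_contra hx0
        push_neg at hx0
        rw [hS, mem_setOf_eq, hg0 x hx0.le] at hx
        linarith
      set c := sInf S with hc
      have hlt_c : ∀ x < c, g x ≤ h := by
        intro x hx
        by_contra hgx
        exact absurd (csInf_le hSbdd (lt_of_not_ge hgx)) (not_le.2 hx)
      have hgt_c : ∀ x, c < x → h < g x := by
        intro x hx
        obtain ⟨y, hyS, hyx⟩ := (csInf_lt_iff hSbdd hSne).1 hx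
        exact hyS.trans_le (hmono hyx.le)
      by_cases hgc : g c ≤ h
      · have hAeq : A = Iic c := by
          ext x
          simp only [hA, mem_setOf_eq, mem_Iic]
          constructor
          · intro hx
            by_contra hxc
            exact absurd hx (not_le.2 (hgt_c x (lt_of_not_ge hxc)))
          · intro hx
            rcases eq_or_lt_of_le hx with rfl | hx'
            · exact hgc
            · exact (hlt_c x hx').trans (le_refl h)
        have hge : h ≤ g c := by
          apply ge_of_tendsto (tendsto_g_Iic ν c)
          filter_upwards with n
          have : c < c + 1/((n:ℝ)+1) := by
            have : (0:ℝ) < 1/((n:ℝ)+1) := by positivity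
            linarith
          exact (hgt_c _ this).le
        rw [hAeq]
        exact le_antisymm hgc hge
      · exfalso
        have hglc : gl c ≤ h := by
          apply le_of_tendsto (tendsto_g_Iio ν c)
          filter_upwards with n
          have : c - 1/((n:ℝ)+1) < c := by
            have : (0:ℝ) < 1/((n:ℝ)+1) := by positivity
            linarith
          exact hlt_c _ this
        have : c ∈ B := ⟨hglc, lt_of_not_ge hgc⟩
        rw [hBe] at this
        exact this
  · -- B = {c}
    have hcB : c ∈ B := by rw [hBc]; exact rfl
    obtain ⟨hglc, hgc⟩ := hcB
    have hΔpos : 0 < g c - gl c := by linarith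
    have hAeq : A = Iio c := by
      ext x
      simp only [hA, mem_setOf_eq, mem_Iio]
      constructor
      · intro hx
        by_contra hxc
        push_neg at hxc
        exact absurd hx (not_le.2 (lt_of_lt_of_le hgc (hmono hxc)))
      · intro hx
        exact (hlt_le x c hx).trans hglc
    have hφ : ∀ x, (if g x ≤ h then (1:ℝ) else
        if gl x ≤ h then (h - gl x) / (g x - gl x) else 0)
        = A.indicator (fun _ => (1:ℝ)) x
          + ({c} : Set ℝ).indicator (fun _ => (h - gl c) / (g c - gl c)) x := by
      intro x
      by_cases h1 : g x ≤ h
      · have hxA : x ∈ A := h1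
        have hxc : x ≠ c := fun hrf => by rw [hrf] at h1; linarith
        rw [indicator_of_mem hxA, indicator_of_notMem (by simpa using hxc)]
        simp [h1]
      · have hxA : x ∉ A := h1
        by_cases h2 : gl x ≤ h
        · have hxB : x ∈ B := ⟨h2, lt_of_not_ge h1⟩
          have hxc : x = c := by rw [hBc] at hxB; exact hxB
          subst hxc
          simp [h1, h2, indicator_of_notMem hxA]
        · have hxc : x ≠ c := fun hrf => by rw [hrf] at h2; exact h2 hglc
          rw [indicator_of_notMem hxA, indicator_of_notMem (by simpa using hxc)]
          simp [h1, h2]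
    rw [integral_congr_ae (Eventually.of_forall hφ),
      integral_add (integrable_indicator_iff hAmeas |>.2 (integrableOn_const (measure_ne_top _ _)))
        (integrable_indicator_iff (measurableSet_singleton c) |>.2 (integrableOn_const (measure_ne_top _ _))),
      integral_indicator_const _ hAmeas, integral_indicator_const _ (measurableSet_singleton c)]
    have hsplit : ν (Iic c) = ν (Iio c) + ν {c} := by
      rw [← measure_union (by simp) (measurableSet_singleton c), Iio_union_right]
    have hνc : (ν {c}).toReal = g c - gl c := by
      have h1 : (ν (Iic c)).toReal = (ν (Iio c)).toReal + (ν {c}).toReal := by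
        rw [hsplit, ENNReal.toReal_add (measure_ne_top _ _) (measure_ne_top _ _)]
      simp only [hg, hgl] at *
      linarith
    rw [hAeq]
    simp only [smul_eq_mul, mul_one, measureReal_def, hνc]
    have : (g c - gl c) * ((h - gl c) / (g c - gl c)) = h - gl c :=
      mul_div_cancel₀ _ (ne_of_gt hΔpos)
    rw [this]
    simp only [hgl]
    ring

/-- The `x`-weighted measure on `(0,∞)`. -/
def nuPos (μ : Measure ℝ) : Measure ℝ :=
  (μ.restrict (Ioi 0)).withDensity (fun x => ENNReal.ofReal x)

lemma nuPos_apply (μ : Measure ℝ) {s : Set ℝ} (hs : MeasurableSet s) :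
    nuPos μ s = ∫⁻ z in s ∩ Ioi 0, ENNReal.ofReal z ∂μ := by
  rw [nuPos, withDensity_apply _ hs, Measure.restrict_restrict hs]

lemma nuPos_Iic (μ : Measure ℝ) (hi : Integrable (fun x => x) μ) (x : ℝ) :
    nuPos μ (Iic x) = ENNReal.ofReal (∫ z in Ioc (0:ℝ) x, z ∂μ) := by
  rw [nuPos_apply μ measurableSet_Iic]
  have : Iic x ∩ Ioi 0 = Ioc 0 x := by ext y; simp [mem_Ioc, and_comm]
  rw [this, ← ofReal_integral_eq_lintegral_ofReal (hi.restrict)]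
  filter_upwards [ae_restrict_mem measurableSet_Ioc] with y hy
  exact hy.1.le

lemma nuPos_Iio (μ : Measure ℝ) (hi : Integrable (fun x => x) μ) (x : ℝ) :
    nuPos μ (Iio x) = ENNReal.ofReal (∫ z in Ioo (0:ℝ) x, z ∂μ) := by
  rw [nuPos_apply μ measurableSet_Iio]
  have : Iio x ∩ Ioi 0 = Ioo 0 x := by ext y; simp [mem_Ioo, and_comm]
  rw [this, ← ofReal_integral_eq_lintegral_ofReal (hi.restrict)]
  filter_upwards [ae_restrict_mem measurableSet_Ioo] with y hy
  exact hy.1.le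

lemma nuPos_univ (μ : Measure ℝ) (hi : Integrable (fun x => x) μ) :
    nuPos μ univ = ENNReal.ofReal (∫ z in Ioi (0:ℝ), z ∂μ) := by
  rw [nuPos_apply μ MeasurableSet.univ, univ_inter,
    ← ofReal_integral_eq_lintegral_ofReal (hi.restrict)]
  filter_upwards [ae_restrict_mem measurableSet_Ioi] with y hy
  exact hy.le

lemma nuPos_finite (μ : Measure ℝ) (hi : Integrable (fun x => x) μ) :
    IsFiniteMeasure (nuPos μ) := by
  constructor
  rw [nuPos_univ μ hi]
  exact ENNReal.ofReal_lt_top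

lemma nuPos_Iic_zero (μ : Measure ℝ) : nuPos μ (Iic 0) = 0 := by
  rw [nuPos_apply μ measurableSet_Iic]
  have : Iic (0:ℝ) ∩ Ioi 0 = ∅ := by
    ext y; simp only [mem_inter_iff, mem_Iic, mem_Ioi, mem_empty_iff_false, iff_false, not_and,
      not_lt]
    exact fun hy => hy
  simp [this]

lemma G_eq_nuPos (μ : Measure ℝ) (hi : Integrable (fun x => x) μ) {x : ℝ} (hx : 0 ≤ x) :
    G μ x = (nuPos μ (Iic x)).toReal := by
  rw [G, if_pos hx, nuPos_Iic μ hi, ENNReal.toReal_ofReal]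
  exact setIntegral_nonneg measurableSet_Ioc (fun y hy => hy.1.le)

lemma leftLim_G_nuPos (μ : Measure ℝ) (hi : Integrable (fun x => x) μ) {x : ℝ} (hx : 0 < x) :
    leftLim (G μ) x = (nuPos μ (Iio x)).toReal := by
  haveI := nuPos_finite μ hi
  have hne : 𝓝[<] x ≠ ⊥ := (nhdsLT_neBot x).ne'
  apply leftLim_eq_of_tendsto
  have h1 : Tendsto (fun y => (nuPos μ (Iic y)).toReal) (𝓝[<] x)
      (𝓝 (leftLim (fun y => (nuPos μ (Iic y)).toReal) x)) := (gmono _).tendsto_leftLim x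
  rw [leftLim_g] at h1
  apply h1.congr'
  filter_upwards [Ioo_mem_nhdsLT_of_mem (show x ∈ Ioc 0 x from ⟨hx, le_refl x⟩)] with y hy
  exact (G_eq_nuPos μ hi hy.1.le).symm

lemma uint (a d h : ℝ) (hd : 0 ≤ d) :
    ∫ u in Icc (0:ℝ) 1, (if a + d * u ≤ h then (1:ℝ) else 0) =
      (if a + d ≤ h then (1:ℝ) else if a ≤ h then (h - a)/d else 0) := by
  rcases eq_or_lt_of_le hd with rfl | hdpos
  · by_cases hab : a ≤ h
    · have h1 : ∀ u, (if a + 0 * u ≤ h then (1:ℝ) else 0) = 1 := by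
        intro u; rw [if_pos (by linarith [zero_mul u] : a + 0 * u ≤ h)]
      rw [integral_congr_ae (Eventually.of_forall h1)]
      simp [Real.volume_Icc, hab]
    · have h1 : ∀ u, (if a + 0 * u ≤ h then (1:ℝ) else 0) = 0 := by
        intro u; rw [if_neg (by rw [zero_mul, add_zero]; exact hab)]
      rw [integral_congr_ae (Eventually.of_forall h1)]
      simp [hab]
  · set t := (h - a)/d with ht
    have hiff : ∀ u : ℝ, (a + d * u ≤ h) ↔ u ≤ t := by
      intro u
      rw [ht, le_div_iff₀ hdpos]
      constructor <;> intro <;> nlinarith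
    have h1 : ∀ u, (if a + d * u ≤ h then (1:ℝ) else 0) = (Iic t).indicator (fun _ => 1) u := by
      intro u
      by_cases hu : u ≤ t
      · rw [if_pos ((hiff u).2 hu), indicator_of_mem (mem_Iic.2 hu)]
      · rw [if_neg (fun hc => hu ((hiff u).1 hc)),
          indicator_of_notMem (fun hc => hu (mem_Iic.1 hc))]
    rw [integral_congr_ae (Eventually.of_forall h1), setIntegral_indicator measurableSet_Iic]
    have h2 : Icc (0:ℝ) 1 ∩ Iic t = Icc 0 (min 1 t) := by
      ext u; simp only [mem_inter_iff, mem_Icc, mem_Iic, le_min_iff]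
      tauto
    rw [h2, setIntegral_const, measureReal_def, Real.volume_Icc, smul_eq_mul, mul_one]
    by_cases hc1 : a + d ≤ h
    · have h3 : (1:ℝ) ≤ t := (one_le_div hdpos).2 (by linarith)
      rw [if_pos hc1, min_eq_left h3]
      norm_num
    · rw [if_neg hc1]
      by_cases hc2 : a ≤ h
      · have h3 : 0 ≤ t := div_nonneg (by linarith) hdpos.le
        have h4 : t < 1 := (div_lt_one hdpos).2 (by linarith)
        rw [if_pos hc2, min_eq_right h4.le]
        rw [ENNReal.toReal_ofReal (by linarith)]
        ring
      · have h3 : t < 0 := div_neg_of_neg_of_pos (by linarith) hdpos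
        have h4 : min 1 t = t := min_eq_right (by linarith)
        rw [if_neg hc2, h4, sub_zero, ENNReal.ofReal_eq_zero.2 h3.le]
        simp

lemma pos_side {Ω : Type*} [MeasurableSpace Ω] (P : Measure Ω) [IsProbabilityMeasure P]
    (X U : Ω → ℝ) (hX : Measurable X) (hU : Measurable U)
    (hindep : ProbabilityTheory.IndepFun X U P)
    (hUunif : Measure.map U P = volume.restrict (Set.Icc (0:ℝ) 1))
    (hint : Integrable X P) {h : ℝ} (hh0 : 0 ≤ h) (hhm : h ≤ mTot (Measure.map X P)) :
    ∫ ω in {ω | 0 < X ω ∧ Gtilde (Measure.map X P) (X ω) (U ω) ≤ h}, X ω ∂P = h := by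
  set μ := Measure.map X P with hμ
  have hi : Integrable (fun x => x) μ :=
    (integrable_map_measure aestronglyMeasurable_id hX.aemeasurable).2 hint
  set ν := nuPos μ with hν
  haveI := nuPos_finite μ hi
  set gp : ℝ → ℝ := fun x => (ν (Iic x)).toReal with hgp
  set glp : ℝ → ℝ := fun x => (ν (Iio x)).toReal with hglp
  have hgm : Monotone gp := gmono ν
  have hglm : Monotone glp := fun a b hab =>
    ENNReal.toReal_mono (measure_ne_top _ _) (measure_mono (Iio_subset_Iio hab))
  have hgl_le : ∀ x, glp x ≤ gp x := fun x =>
    ENNReal.toReal_mono (measure_ne_top _ _) (measure_mono Iio_subset_Iic_self)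
  set υ := volume.restrict (Set.Icc (0:ℝ) 1) with hυ
  haveI : IsProbabilityMeasure υ := ⟨by simp [hυ, Real.volume_Icc]⟩
  set φ : ℝ → ℝ := fun x => if gp x ≤ h then (1:ℝ) else
      if glp x ≤ h then (h - glp x) / (gp x - glp x) else 0 with hφdef
  have hφmeas : Measurable φ := by
    apply Measurable.ite (hgm.measurable measurableSet_Iic) measurable_const
    apply Measurable.ite (hglm.measurable measurableSet_Iic) _ measurable_const
    exact (measurable_const.sub hglm.measurable).div (hgm.measurable.sub hglm.measurable)
  have hφ01 : ∀ x, 0 ≤ φ x ∧ φ x ≤ 1 := by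
    intro x
    rw [hφdef]
    by_cases h1 : gp x ≤ h
    · simp [h1]
    · by_cases h2 : glp x ≤ h
      · have hΔ : 0 < gp x - glp x := by
          have := lt_of_not_ge h1; linarith
        simp only [h1, h2, if_false, if_true]
        constructor
        · exact div_nonneg (by linarith) hΔ.le
        · rw [div_le_one hΔ]; linarith [lt_of_not_ge h1]
      · simp [h1, h2]
  set T : Set (ℝ × ℝ) := {p | 0 < p.1 ∧ glp p.1 + (gp p.1 - glp p.1) * p.2 ≤ h} with hT
  have hTmeas : MeasurableSet T := by
    apply MeasurableSet.inter
    · exact measurableSet_lt measurable_const measurable_fst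
    · exact measurableSet_le ((hglm.measurable.comp measurable_fst).add
        (((hgm.measurable.sub hglm.measurable).comp measurable_fst).mul measurable_snd))
        measurable_const
  have hGt : ∀ x u : ℝ, 0 < x → Gtilde μ x u = glp x + (gp x - glp x) * u := by
    intro x u hx
    rw [Gtilde, if_pos hx.le, leftLim_G_nuPos μ hi hx, G_eq_nuPos μ hi hx.le]
  have hset : {ω | 0 < X ω ∧ Gtilde μ (X ω) (U ω) ≤ h} = (fun ω => (X ω, U ω)) ⁻¹' T := by
    ext ω
    simp only [mem_setOf_eq, mem_preimage, hT]
    constructor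
    · rintro ⟨h1, h2⟩; exact ⟨h1, by rwa [hGt _ _ h1] at h2⟩
    · rintro ⟨h1, h2⟩; exact ⟨h1, by rwa [hGt _ _ h1]⟩
  have hmeasind : Measurable (T.indicator (fun p : ℝ × ℝ => p.1)) :=
    measurable_fst.indicator hTmeas
  have hprod : Measure.map (fun ω => (X ω, U ω)) P = μ.prod υ := by
    rw [(ProbabilityTheory.indepFun_iff_map_prod_eq_prod_map_map hX.aemeasurable
      hU.aemeasurable).1 hindep, hUunif]
  have hfst : Integrable (fun p : ℝ × ℝ => p.1) (μ.prod υ) := by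
    have hmap : Measure.map Prod.fst (μ.prod υ) = μ := by
      rw [Measure.map_fst_prod, measure_univ, one_smul]
    have := (integrable_map_measure aestronglyMeasurable_id
      measurable_fst.aemeasurable).1 (by rwa [hmap] : Integrable (fun x => x) (Measure.map Prod.fst (μ.prod υ)))
    exact this
  have hTint : Integrable (T.indicator (fun p : ℝ × ℝ => p.1)) (μ.prod υ) := by
    apply hfst.mono hmeasind.aestronglyMeasurable
    filter_upwards with p
    exact norm_indicator_le_norm_self _ p
  have step1 : ∫ ω in {ω | 0 < X ω ∧ Gtilde μ (X ω) (U ω) ≤ h}, X ω ∂P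
      = ∫ p, T.indicator (fun p : ℝ × ℝ => p.1) p ∂(μ.prod υ) := by
    rw [hset, ← hprod,
      integral_map (hX.prodMk hU).aemeasurable hmeasind.aestronglyMeasurable,
      ← integral_indicator ((hX.prodMk hU) hTmeas)]
    congr 1
  have hinner : ∀ x : ℝ, ∫ u, T.indicator (fun p : ℝ × ℝ => p.1) (x, u) ∂υ
      = (Ioi (0:ℝ)).indicator (fun x => x * φ x) x := by
    intro x
    by_cases hx : 0 < x
    · rw [indicator_of_mem (mem_Ioi.2 hx)]
      have heq : ∀ u, T.indicator (fun p : ℝ × ℝ => p.1) (x, u)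
          = x * (if glp x + (gp x - glp x) * u ≤ h then (1:ℝ) else 0) := by
        intro u
        by_cases hc : glp x + (gp x - glp x) * u ≤ h
        · rw [if_pos hc, mul_one, indicator_of_mem (show (x,u) ∈ T from ⟨hx, hc⟩)]
        · rw [if_neg hc, mul_zero, indicator_of_notMem (fun hm => hc hm.2)]
      rw [integral_congr_ae (Eventually.of_forall heq), integral_const_mul, hυ,
        uint (glp x) (gp x - glp x) h (sub_nonneg.2 (hgl_le x))]
      have harith : glp x + (gp x - glp x) = gp x := by ring
      rw [harith]
    · rw [indicator_of_notMem (fun hc => hx (mem_Ioi.1 hc))]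
      have heq : ∀ u, T.indicator (fun p : ℝ × ℝ => p.1) (x, u) = 0 := fun u =>
        indicator_of_notMem (fun hm => hx hm.1) _
      rw [integral_congr_ae (Eventually.of_forall heq), integral_zero]
  have step2 : ∫ p, T.indicator (fun p : ℝ × ℝ => p.1) p ∂(μ.prod υ)
      = ∫ x in Ioi (0:ℝ), x * φ x ∂μ := by
    rw [integral_prod _ hTint, integral_congr_ae (Eventually.of_forall hinner),
      integral_indicator measurableSet_Ioi]
  have step3 : ∫ x in Ioi (0:ℝ), x * φ x ∂μ = ∫ x, φ x ∂ν := by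
    have hd : (fun x : ℝ => ENNReal.ofReal x) = (fun x : ℝ => (Real.toNNReal x : ENNReal)) := rfl
    rw [hν, nuPos, hd, integral_withDensity_eq_integral_smul measurable_real_toNNReal φ]
    apply integral_congr_ae
    filter_upwards [ae_restrict_mem measurableSet_Ioi] with x hx
    rw [NNReal.smul_def, smul_eq_mul, Real.coe_toNNReal _ (le_of_lt hx)]
  have hm_eq : (ν univ).toReal = mTot μ := by
    rw [hν, nuPos_univ μ hi, ENNReal.toReal_ofReal
      (setIntegral_nonneg measurableSet_Ioi (fun y hy => (mem_Ioi.1 hy).le))]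
    rfl
  rw [step1, step2, step3]
  exact core ν (nuPos_Iic_zero μ) hh0 (by rw [hm_eq]; exact hhm)

lemma G_neg (μ : Measure ℝ) {y : ℝ} (hy : 0 < y) :
    G (Measure.map (fun z : ℝ => -z) μ) y = G μ (-y) := by
  have hpre : (fun z : ℝ => -z) ⁻¹' (Ioc 0 y) = Ico (-y) 0 := by
    ext x
    simp only [mem_preimage, mem_Ioc, mem_Ico]
    constructor <;> rintro ⟨h1, h2⟩ <;> constructor <;> linarith
  rw [G, if_pos hy.le, G, if_neg (by linarith : ¬ (0:ℝ) ≤ -y)]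
  have h2 := setIntegral_map (μ := μ) (g := fun z : ℝ => -z) (f := fun z : ℝ => z)
      (s := Ioc 0 y) measurableSet_Ioc aestronglyMeasurable_id measurable_neg.aemeasurable
  rw [hpre] at h2
  exact h2

lemma tendsto_G_Iio (μ : Measure ℝ) (hi : Integrable (fun x => x) μ) {x : ℝ} (hx : 0 < x) :
    Tendsto (G μ) (𝓝[<] x) (𝓝 ((nuPos μ (Iio x)).toReal)) := by
  haveI := nuPos_finite μ hi
  have h1 : Tendsto (fun y => (nuPos μ (Iic y)).toReal) (𝓝[<] x)
      (𝓝 (leftLim (fun y => (nuPos μ (Iic y)).toReal) x)) := (gmono _).tendsto_leftLim x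
  rw [leftLim_g] at h1
  apply h1.congr'
  filter_upwards [Ioo_mem_nhdsLT_of_mem (show x ∈ Ioc 0 x from ⟨hx, le_refl x⟩)] with y hy
  exact (G_eq_nuPos μ hi hy.1.le).symm

lemma rightLim_G_neg (μ : Measure ℝ) (hi : Integrable (fun x => x) μ) {x : ℝ} (hx : x < 0) :
    rightLim (G μ) x = leftLim (G (Measure.map (fun z : ℝ => -z) μ)) (-x) := by
  set μ' := Measure.map (fun z : ℝ => -z) μ with hμ'
  have hi' : Integrable (fun z => z) μ' := by
    rw [hμ']
    exact (integrable_map_measure aestronglyMeasurable_id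
      measurable_neg.aemeasurable).2 hi.neg
  have hxpos : 0 < -x := by linarith
  have hLL : leftLim (G μ') (-x) = (nuPos μ' (Iio (-x))).toReal :=
    leftLim_G_nuPos μ' hi' hxpos
  have hne : 𝓝[>] x ≠ ⊥ := (nhdsGT_neBot x).ne'
  apply rightLim_eq_of_tendsto
  rw [hLL]
  have hneg : Tendsto (fun w : ℝ => -w) (𝓝[>] x) (𝓝[<] (-x)) := by
    apply tendsto_nhdsWithin_of_tendsto_nhds_of_eventually_within
    · exact (continuous_neg.tendsto x).mono_left nhdsWithin_le_nhds
    · filter_upwards [self_mem_nhdsWithin] with w hw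
      simp only [mem_Iio]
      exact neg_lt_neg hw
  have hcomp : Tendsto (fun w => G μ' (-w)) (𝓝[>] x) (𝓝 ((nuPos μ' (Iio (-x))).toReal)) :=
    (tendsto_G_Iio μ' hi' hxpos).comp hneg
  apply hcomp.congr'
  filter_upwards [Ioo_mem_nhdsGT_of_mem (show x ∈ Ico x 0 from ⟨le_refl x, hx⟩)] with w hw
  show G μ' (-w) = G μ w
  rw [hμ', G_neg μ (neg_pos.2 hw.2), neg_neg]

lemma Gtilde_neg (μ : Measure ℝ) (hi : Integrable (fun x => x) μ) {x : ℝ} (hx : x < 0)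
    (u : ℝ) : Gtilde μ x u = Gtilde (Measure.map (fun z : ℝ => -z) μ) (-x) u := by
  rw [Gtilde, if_neg (by linarith : ¬ (0:ℝ) ≤ x), Gtilde, if_pos (by linarith : (0:ℝ) ≤ -x),
    rightLim_G_neg μ hi hx, G_neg μ (show (0:ℝ) < -x by linarith), neg_neg]

lemma mTot_neg (μ : Measure ℝ) (hi : Integrable (fun x => x) μ) (hmean : ∫ x, x ∂μ = 0) :
    mTot (Measure.map (fun z : ℝ => -z) μ) = mTot μ := by
  have hpre : (fun z : ℝ => -z) ⁻¹' (Ioi 0) = Iio 0 := by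
    ext x
    simp only [mem_preimage, mem_Ioi, mem_Iio]
    constructor <;> intro <;> linarith
  have h1 : mTot (Measure.map (fun z : ℝ => -z) μ) = ∫ x in Iio (0:ℝ), -x ∂μ := by
    rw [mTot]
    have h2 := setIntegral_map (μ := μ) (g := fun z : ℝ => -z) (f := fun z : ℝ => z)
        (s := Ioi 0) measurableSet_Ioi aestronglyMeasurable_id measurable_neg.aemeasurable
    rw [hpre] at h2
    exact h2
  have hsplit : ∫ x in Iio (0:ℝ), x ∂μ + ∫ x in Ici (0:ℝ), x ∂μ = 0 := by
    rw [← setIntegral_union (Iio_disjoint_Ici (le_refl (0:ℝ))) measurableSet_Ici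
      hi.integrableOn hi.integrableOn, Iio_union_Ici, setIntegral_univ]
    exact hmean
  have hIci : ∫ x in Ici (0:ℝ), x ∂μ = ∫ x in Ioi (0:ℝ), x ∂μ := by
    rw [← Ioi_union_left, setIntegral_union (by simp) (measurableSet_singleton 0)
      hi.integrableOn hi.integrableOn, integral_singleton]
    simp
  rw [h1, integral_neg, mTot]
  linarith [hsplit, hIci]

/-- `E[X·1{X>0, G̃(X,U) ≤ h}] = h` and `E[(-X)·1{X<0, G̃(X,U) ≤ h}] = h` for `h ∈ [0,m]`. -/
theorem truncated_expectation_identity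
    {Ω : Type*} [MeasurableSpace Ω] (P : Measure Ω) [IsProbabilityMeasure P]
    (X U : Ω → ℝ) (hX : Measurable X) (hU : Measurable U)
    (hindep : IndepFun X U P)
    (hUunif : Measure.map U P = volume.restrict (Set.Icc (0:ℝ) 1))
    (hint : Integrable X P) (hmean : ∫ ω, X ω ∂P = 0) :
    ∀ h : ℝ, h ∈ Set.Icc 0 (mTot (Measure.map X P)) →
      (∫ ω in {ω | 0 < X ω ∧ Gtilde (Measure.map X P) (X ω) (U ω) ≤ h}, X ω ∂P = h) ∧
      (∫ ω in {ω | X ω < 0 ∧ Gtilde (Measure.map X P) (X ω) (U ω) ≤ h}, -X ω ∂P = h) := by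
  intro h hmem
  obtain ⟨hh0, hhm⟩ := hmem
  refine ⟨pos_side P X U hX hU hindep hUunif hint hh0 hhm, ?_⟩
  set μ := Measure.map X P with hμdef
  have hi : Integrable (fun x => x) μ :=
    (integrable_map_measure aestronglyMeasurable_id hX.aemeasurable).2 hint
  have hmeanμ : ∫ x, x ∂μ = 0 := by
    have h2 := integral_map (μ := P) (φ := X) (f := fun x : ℝ => x) hX.aemeasurable
      aestronglyMeasurable_id
    rw [hμdef]
    exact h2.trans hmean
  have hmapneg : Measure.map (fun z : ℝ => -z) μ = Measure.map (fun ω => -X ω) P := by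
    rw [hμdef, Measure.map_map measurable_neg hX]
    rfl
  have hbound : h ≤ mTot (Measure.map (fun ω => -X ω) P) := by
    rw [← hmapneg, mTot_neg μ hi hmeanμ]
    exact hhm
  have hposneg := pos_side P (fun ω => -X ω) U hX.neg hU
    (hindep.comp measurable_neg measurable_id) hUunif hint.neg hh0 hbound
  have hsets : {ω | 0 < -X ω ∧ Gtilde (Measure.map (fun ω => -X ω) P) (-X ω) (U ω) ≤ h}
      = {ω | X ω < 0 ∧ Gtilde μ (X ω) (U ω) ≤ h} := by
    ext ω
    simp only [mem_setOf_eq, neg_pos]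
    constructor
    · rintro ⟨h1, h2⟩
      refine ⟨h1, ?_⟩
      rwa [Gtilde_neg μ hi h1 (U ω), hmapneg]
    · rintro ⟨h1, h2⟩
      refine ⟨h1, ?_⟩
      rwa [Gtilde_neg μ hi h1 (U ω), hmapneg] at h2
  rw [← hsets]
  exact hposneg
end
end

section
/- With X, U, G̃ as above: for every real h, P(X ≠ 0 and G̃(X,U) = h) = 0. Hence the distribution of G̃(X,U) can have an atom only at 0. -/
open MeasureTheory ProbabilityTheory Set Function
open Filter Topology
open scoped ENNReal
set_option linter.unusedSectionVars false
set_option linter.unusedVariables false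

noncomputable section

namespace GtildeAux
variable (μ : Measure ℝ) [IsFiniteMeasure μ]

def gP (x : ℝ) : ℝ := ∫ z in Set.Ioc (0:ℝ) x, z ∂μ
def gM (x : ℝ) : ℝ := ∫ z in Set.Ico x 0, -z ∂μ
def AP (x : ℝ) : ℝ := ∫ z in Set.Ioo (0:ℝ) x, z ∂μ
def AM (x : ℝ) : ℝ := ∫ z in Set.Ioo x 0, -z ∂μ

lemma intOnIcc (a b : ℝ) : IntegrableOn (fun z : ℝ => z) (Set.Icc a b) μ := by
  apply Measure.integrableOn_of_bounded (M := max |a| |b|) (measure_ne_top μ _)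
    aestronglyMeasurable_id
  refine (ae_restrict_iff' measurableSet_Icc).2 (ae_of_all _ fun x hx => ?_)
  rw [Real.norm_eq_abs, abs_le]
  exact ⟨le_trans (neg_le_neg (le_max_left |a| |b|)) ((neg_abs_le a).trans hx.1),
    hx.2.trans ((le_abs_self b).trans (le_max_right _ _))⟩

lemma intOn {s : Set ℝ} {a b : ℝ} (hs : s ⊆ Set.Icc a b) : IntegrableOn (fun z : ℝ => z) s μ :=
  (intOnIcc μ a b).mono_set hs

lemma intOnNeg {s : Set ℝ} {a b : ℝ} (hs : s ⊆ Set.Icc a b) :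
    IntegrableOn (fun z : ℝ => -z) s μ := (intOn μ hs).neg

lemma gP_mono : Monotone (gP μ) := by
  intro x y hxy
  apply setIntegral_mono_set (intOn μ (Set.Ioc_subset_Icc_self))
  · exact (ae_restrict_iff' measurableSet_Ioc).2 (ae_of_all _ fun z hz => hz.1.le)
  · exact (Set.Ioc_subset_Ioc_right hxy).eventuallyLE

lemma AP_mono : Monotone (AP μ) := by
  intro x y hxy
  apply setIntegral_mono_set (intOn μ (Set.Ioo_subset_Icc_self))
  · exact (ae_restrict_iff' measurableSet_Ioo).2 (ae_of_all _ fun z hz => hz.1.le)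
  · exact (Set.Ioo_subset_Ioo_right hxy).eventuallyLE

lemma gM_anti : Antitone (gM μ) := by
  intro x y hxy
  apply setIntegral_mono_set (intOnNeg μ (Set.Ico_subset_Icc_self))
  · exact (ae_restrict_iff' measurableSet_Ico).2 (ae_of_all _ fun z hz => by
      simp only [Pi.zero_apply, neg_nonneg]; exact hz.2.le)
  · exact (Set.Ico_subset_Ico_left hxy).eventuallyLE

lemma AM_anti : Antitone (AM μ) := by
  intro x y hxy
  apply setIntegral_mono_set (intOnNeg μ (Set.Ioo_subset_Icc_self))
  · exact (ae_restrict_iff' measurableSet_Ioo).2 (ae_of_all _ fun z hz => by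
      simp only [Pi.zero_apply, neg_nonneg]; exact hz.2.le)
  · exact (Set.Ioo_subset_Ioo_left hxy).eventuallyLE

lemma gP_nonneg (x : ℝ) : 0 ≤ gP μ x :=
  setIntegral_nonneg measurableSet_Ioc fun z hz => hz.1.le

lemma AP_nonneg (x : ℝ) : 0 ≤ AP μ x :=
  setIntegral_nonneg measurableSet_Ioo fun z hz => hz.1.le

lemma gM_nonneg (x : ℝ) : 0 ≤ gM μ x :=
  setIntegral_nonneg measurableSet_Ico fun z hz => neg_nonneg.2 hz.2.le

lemma AM_nonneg (x : ℝ) : 0 ≤ AM μ x :=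
  setIntegral_nonneg measurableSet_Ioo fun z hz => neg_nonneg.2 hz.2.le

lemma gP_le_AP {y x : ℝ} (hyx : y < x) : gP μ y ≤ AP μ x := by
  rcases le_or_gt y 0 with h0 | h0
  · rw [gP, Set.Ioc_eq_empty (not_lt.2 h0), Measure.restrict_empty, integral_zero_measure]
    exact AP_nonneg μ x
  · apply setIntegral_mono_set (intOn μ (Set.Ioo_subset_Icc_self))
    · exact (ae_restrict_iff' measurableSet_Ioo).2 (ae_of_all _ fun z hz => hz.1.le)
    · exact HasSubset.Subset.eventuallyLE (fun z hz => ⟨hz.1, lt_of_le_of_lt hz.2 hyx⟩)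

lemma gM_le_AM {x y : ℝ} (hxy : x < y) : gM μ y ≤ AM μ x := by
  rcases le_or_gt 0 y with h0 | h0
  · rw [gM, Set.Ico_eq_empty (not_lt.2 h0), Measure.restrict_empty, integral_zero_measure]
    exact AM_nonneg μ x
  · apply setIntegral_mono_set (intOnNeg μ (Set.Ioo_subset_Icc_self))
    · exact (ae_restrict_iff' measurableSet_Ioo).2 (ae_of_all _ fun z hz => by
        simp only [Pi.zero_apply, neg_nonneg]; exact hz.2.le)
    · exact HasSubset.Subset.eventuallyLE (fun z hz => ⟨lt_of_lt_of_le hxy hz.1, hz.2⟩)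

lemma tendsto_gP {x : ℝ} (hx : 0 < x) : Tendsto (gP μ) (𝓝[<] x) (𝓝 (AP μ x)) := by
  have hBdd : BddAbove (gP μ '' Set.Iio x) := by
    refine ⟨AP μ x, ?_⟩
    rintro _ ⟨y, hy, rfl⟩
    exact gP_le_AP μ hy
  have h1 := (gP_mono μ).tendsto_nhdsLT x
  have hsup : sSup (gP μ '' Set.Iio x) = AP μ x := by
    apply le_antisymm
    · refine csSup_le ((Set.nonempty_Iio (a := x)).image _) ?_
      rintro _ ⟨y, hy, rfl⟩
      exact gP_le_AP μ hy
    · set y : ℕ → ℝ := fun n => x - x / (n + 2) with hydef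
      have hy0 : ∀ n, y n ∈ Set.Ioo 0 x := by
        intro n
        constructor
        · have : x / ((n : ℝ) + 2) < x := div_lt_self hx (by have := Nat.cast_nonneg (α := ℝ) n; linarith)
          simp only [hydef]; linarith
        · have : 0 < x / ((n : ℝ) + 2) := by positivity
          simp only [hydef]; linarith
      have hymono : Monotone y := by
        intro n m hnm
        have h1 : (0:ℝ) < (n:ℝ) + 2 := by positivity
        have h2 : ((n:ℝ) + 2) ≤ ((m:ℝ) + 2) := by
          have : (n:ℝ) ≤ (m:ℝ) := Nat.cast_le.2 hnm
          linarith
        have := div_le_div_of_nonneg_left hx.le h1 h2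
        simp only [hydef]; linarith [div_le_div_of_nonneg_left hx.le h1 h2]
      have hmono : Monotone fun n => Set.Ioc (0:ℝ) (y n) :=
        fun n m hnm => Set.Ioc_subset_Ioc_right (hymono hnm)
      have hun : (⋃ n, Set.Ioc (0:ℝ) (y n)) = Set.Ioo 0 x := by
        ext z
        simp only [Set.mem_iUnion, Set.mem_Ioc, Set.mem_Ioo]
        constructor
        · rintro ⟨n, h1, h2⟩
          exact ⟨h1, h2.trans_lt (hy0 n).2⟩
        · rintro ⟨h1, h2⟩
          have hxz : 0 < x - z := sub_pos.2 h2
          obtain ⟨n, hn⟩ := exists_nat_ge (x / (x - z))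
          refine ⟨n, h1, ?_⟩
          have key : x / ((n : ℝ) + 2) ≤ x - z := by
            rw [div_le_iff₀ (by positivity)]
            have h3 : x / (x - z) ≤ (n:ℝ) + 2 := hn.trans (by linarith)
            calc x = x / (x - z) * (x - z) := by field_simp
            _ ≤ ((n:ℝ) + 2) * (x - z) := mul_le_mul_of_nonneg_right h3 hxz.le
            _ = (x - z) * ((n:ℝ) + 2) := mul_comm _ _
          simp only [hydef]; linarith
      have ht := tendsto_setIntegral_of_monotone (μ := μ) (f := fun z : ℝ => z)
        (fun n => measurableSet_Ioc) hmono (hun ▸ intOn μ (Set.Ioo_subset_Icc_self))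
      rw [hun] at ht
      exact le_of_tendsto ht (Eventually.of_forall fun n =>
        le_csSup hBdd (Set.mem_image_of_mem _ (hy0 n).2))
  rwa [hsup] at h1

lemma tendsto_gM {x : ℝ} (hx : x < 0) : Tendsto (gM μ) (𝓝[>] x) (𝓝 (AM μ x)) := by
  have hBdd : BddAbove (gM μ '' Set.Ioi x) := by
    refine ⟨AM μ x, ?_⟩
    rintro _ ⟨y, hy, rfl⟩
    exact gM_le_AM μ hy
  have h1 := (gM_anti μ).tendsto_nhdsGT x
  have hsup : sSup (gM μ '' Set.Ioi x) = AM μ x := by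
    apply le_antisymm
    · refine csSup_le ((Set.nonempty_Ioi (a := x)).image _) ?_
      rintro _ ⟨y, hy, rfl⟩
      exact gM_le_AM μ hy
    · set y : ℕ → ℝ := fun n => x - x / (n + 2) with hydef
      have hy0 : ∀ n, y n ∈ Set.Ioo x 0 := by
        intro n
        constructor
        · have : x / ((n : ℝ) + 2) < 0 := div_neg_of_neg_of_pos hx (by positivity)
          simp only [hydef]; linarith
        · have h2 : x < x / ((n:ℝ) + 2) := by
            rw [lt_div_iff₀ (by positivity : (0:ℝ) < (n:ℝ) + 2)]
            nlinarith
          simp only [hydef]; linarith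
      have hyanti : Antitone y := by
        intro n m hnm
        have h1 : (0:ℝ) < (n:ℝ) + 2 := by positivity
        have h1m : (0:ℝ) < (m:ℝ) + 2 := by positivity
        have h2 : ((n:ℝ) + 2) ≤ ((m:ℝ) + 2) := by
          have : (n:ℝ) ≤ (m:ℝ) := Nat.cast_le.2 hnm
          linarith
        have : x / ((n:ℝ) + 2) ≤ x / ((m:ℝ) + 2) := by
          rw [div_le_div_iff₀ h1 h1m]
          nlinarith
        simp only [hydef]; linarith
      have hmono : Monotone fun n => Set.Ico (y n) (0:ℝ) :=
        fun n m hnm => Set.Ico_subset_Ico_left (hyanti hnm)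
      have hun : (⋃ n, Set.Ico (y n) (0:ℝ)) = Set.Ioo x 0 := by
        ext z
        simp only [Set.mem_iUnion, Set.mem_Ico, Set.mem_Ioo]
        constructor
        · rintro ⟨n, h1, h2⟩
          exact ⟨(hy0 n).1.trans_le h1, h2⟩
        · rintro ⟨h1, h2⟩
          have hxz : 0 < z - x := sub_pos.2 h1
          obtain ⟨n, hn⟩ := exists_nat_ge ((-x) / (z - x))
          refine ⟨n, ?_, h2⟩
          have key : (-x) / ((n : ℝ) + 2) ≤ z - x := by
            rw [div_le_iff₀ (by positivity)]
            have h3 : (-x) / (z - x) ≤ (n:ℝ) + 2 := hn.trans (by linarith)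
            calc -x = (-x) / (z - x) * (z - x) := by field_simp
            _ ≤ ((n:ℝ) + 2) * (z - x) := mul_le_mul_of_nonneg_right h3 hxz.le
            _ = (z - x) * ((n:ℝ) + 2) := mul_comm _ _
          have hnd : -(x / ((n:ℝ) + 2)) = (-x) / ((n:ℝ) + 2) := (neg_div _ _).symm
          simp only [hydef]; linarith
      have ht := tendsto_setIntegral_of_monotone (μ := μ) (f := fun z : ℝ => -z)
        (fun n => measurableSet_Ico) hmono (hun ▸ intOnNeg μ (Set.Ioo_subset_Icc_self))
      rw [hun] at ht
      exact le_of_tendsto ht (Eventually.of_forall fun n =>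
        le_csSup hBdd (Set.mem_image_of_mem _ (hy0 n).1))
  rwa [hsup] at h1

lemma leftLim_G_pos {x : ℝ} (hx : 0 < x) : Function.leftLim (G μ) x = AP μ x := by
  apply leftLim_eq_of_tendsto
  have heq : (gP μ) =ᶠ[𝓝[<] x] (G μ) := by
    filter_upwards [Ioo_mem_nhdsLT_of_mem (⟨hx, le_rfl⟩ : x ∈ Set.Ioc 0 x)] with y hy
    rw [G, if_pos hy.1.le]; rfl
  exact Tendsto.congr' heq (tendsto_gP μ hx)

lemma rightLim_G_neg {x : ℝ} (hx : x < 0) : Function.rightLim (G μ) x = AM μ x := by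
  apply rightLim_eq_of_tendsto
  have heq : (gM μ) =ᶠ[𝓝[>] x] (G μ) := by
    filter_upwards [Ioo_mem_nhdsGT_of_mem (⟨le_rfl, hx⟩ : x ∈ Set.Ico x 0)] with y hy
    rw [G, if_neg (not_le.2 hy.2)]; rfl
  exact Tendsto.congr' heq (tendsto_gM μ hx)

lemma leftLim_G_zero : Function.leftLim (G μ) 0 = 0 := by
  apply leftLim_eq_of_tendsto
  have heq : (gM μ) =ᶠ[𝓝[<] (0:ℝ)] (G μ) := by
    filter_upwards [self_mem_nhdsWithin] with y hy
    rw [G, if_neg (not_le.2 hy)]; rfl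
  refine Tendsto.congr' heq ?_
  have hBdd : BddBelow (gM μ '' Set.Iio (0:ℝ)) :=
    ⟨0, by rintro _ ⟨y, hy, rfl⟩; exact gM_nonneg μ y⟩
  have h1 := (gM_anti μ).tendsto_nhdsLT (0:ℝ)
  have hinf : sInf (gM μ '' Set.Iio (0:ℝ)) = 0 := by
    apply le_antisymm
    · set y : ℕ → ℝ := fun n => -(1 / ((n:ℝ) + 1)) with hydef
      have hy0 : ∀ n, y n ∈ Set.Iio (0:ℝ) := by
        intro n
        have : (0:ℝ) < 1 / ((n:ℝ) + 1) := by positivity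
        simp only [hydef, Set.mem_Iio]; linarith
      have hanti : Antitone fun n => Set.Ico (y n) (0:ℝ) := by
        intro n m hnm
        apply Set.Ico_subset_Ico_left
        have h1 : (0:ℝ) < (n:ℝ) + 1 := by positivity
        have h1m : (0:ℝ) < (m:ℝ) + 1 := by positivity
        have h2 : ((n:ℝ) + 1) ≤ ((m:ℝ) + 1) := by
          have : (n:ℝ) ≤ (m:ℝ) := Nat.cast_le.2 hnm
          linarith
        have : 1 / ((m:ℝ) + 1) ≤ 1 / ((n:ℝ) + 1) := by
          rw [div_le_div_iff₀ h1m h1]; linarith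
        simp only [hydef]; linarith
      have hiInter : (⋂ n, Set.Ico (y n) (0:ℝ)) = ∅ := by
        ext z
        simp only [Set.mem_iInter, Set.mem_Ico, Set.mem_empty_iff_false, iff_false, not_forall]
        by_cases hz : z < 0
        · obtain ⟨n, hn⟩ := exists_nat_one_div_lt (show (0:ℝ) < -z by linarith)
          refine ⟨n, fun hc => ?_⟩
          have := hc.1
          simp only [hydef] at this
          linarith
        · exact ⟨0, fun hc => hz hc.2⟩
      have ht := tendsto_setIntegral_of_antitone (μ := μ) (f := fun z : ℝ => -z)
        (fun n => measurableSet_Ico) hanti ⟨0, intOnNeg μ (Set.Ico_subset_Icc_self)⟩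
      rw [hiInter, Measure.restrict_empty, integral_zero_measure] at ht
      exact ge_of_tendsto ht (Eventually.of_forall fun n =>
        csInf_le hBdd (Set.mem_image_of_mem _ (hy0 n)))
    · refine le_csInf ((Set.nonempty_Iio (a := (0:ℝ))).image _) ?_
      rintro _ ⟨y, hy, rfl⟩
      exact gM_nonneg μ y
  rwa [hinf] at h1

lemma jumpP {x : ℝ} (hx : 0 < x) (h : gP μ x = AP μ x) : μ {x} = 0 := by
  have hu : Set.Ioo 0 x ∪ {x} = Set.Ioc 0 x := Set.Ioo_union_right hx
  have hdisj : Disjoint (Set.Ioo 0 x) ({x} : Set ℝ) :=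
    Set.disjoint_singleton_right.2 (fun hc => lt_irrefl x hc.2)
  have hint : ∫ z in Set.Ioc (0:ℝ) x, z ∂μ
      = (∫ z in Set.Ioo (0:ℝ) x, z ∂μ) + ∫ z in ({x} : Set ℝ), z ∂μ := by
    rw [← hu]
    exact setIntegral_union hdisj (measurableSet_singleton x)
      (intOn μ Set.Ioo_subset_Icc_self)
      (intOn μ (Set.singleton_subset_iff.2 (Set.mem_Icc.2 ⟨le_rfl, le_rfl⟩)))
  rw [integral_singleton] at hint
  have h0 : (μ {x}).toReal • x = 0 := by
    have : gP μ x = AP μ x + (μ {x}).toReal • x := hint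
    rw [h] at this; linarith [this]
  have : (μ {x}).toReal = 0 := by
    rcases smul_eq_zero.1 h0 with h1 | h1
    · exact h1
    · exact absurd h1 hx.ne'
  exact ((ENNReal.toReal_eq_zero_iff _).1 this).resolve_right (measure_ne_top μ _)

lemma gapP {x y : ℝ} (hx : 0 < x) (hxy : x < y) (h : AP μ y = gP μ x) :
    μ (Set.Ioo x y) = 0 := by
  have hu : Set.Ioc 0 x ∪ Set.Ioo x y = Set.Ioo 0 y := by
    ext z
    simp only [Set.mem_union, Set.mem_Ioc, Set.mem_Ioo]
    constructor
    · rintro (⟨h1, h2⟩ | ⟨h1, h2⟩)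
      · exact ⟨h1, h2.trans_lt hxy⟩
      · exact ⟨hx.trans h1, h2⟩
    · rintro ⟨h1, h2⟩
      rcases le_or_gt z x with h3 | h3
      · exact Or.inl ⟨h1, h3⟩
      · exact Or.inr ⟨h3, h2⟩
  have hdisj : Disjoint (Set.Ioc 0 x) (Set.Ioo x y) :=
    Set.disjoint_left.mpr fun z hz1 hz2 => absurd hz2.1 (not_lt.2 hz1.2)
  have hint : ∫ z in Set.Ioo (0:ℝ) y, z ∂μ
      = (∫ z in Set.Ioc (0:ℝ) x, z ∂μ) + ∫ z in Set.Ioo x y, z ∂μ := by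
    rw [← hu]
    exact setIntegral_union hdisj measurableSet_Ioo
      (intOn μ Set.Ioc_subset_Icc_self) (intOn μ Set.Ioo_subset_Icc_self)
  have hzero : ∫ z in Set.Ioo x y, z ∂μ = 0 := by
    have : AP μ y = gP μ x + ∫ z in Set.Ioo x y, z ∂μ := hint
    rw [h] at this; linarith
  have hlow := setIntegral_ge_of_const_le (μ := μ) (f := fun z : ℝ => z) (c := x) (s := Set.Ioo x y)
    measurableSet_Ioo (measure_ne_top μ _) (fun z hz => hz.1.le)
    (intOn μ Set.Ioo_subset_Icc_self)
  rw [hzero] at hlow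
  simp only [Measure.real, smul_eq_mul] at hlow
  have ht : (μ (Set.Ioo x y)).toReal = 0 := by
    nlinarith [ENNReal.toReal_nonneg (a := μ (Set.Ioo x y))]
  exact ((ENNReal.toReal_eq_zero_iff _).1 ht).resolve_right (measure_ne_top μ _)

lemma jumpM {x : ℝ} (hx : x < 0) (h : gM μ x = AM μ x) : μ {x} = 0 := by
  have hu : Set.Ioo x 0 ∪ {x} = Set.Ico x 0 := Set.Ioo_union_left hx
  have hdisj : Disjoint (Set.Ioo x 0) ({x} : Set ℝ) :=
    Set.disjoint_singleton_right.2 (fun hc => lt_irrefl x hc.1)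
  have hint : ∫ z in Set.Ico x (0:ℝ), -z ∂μ
      = (∫ z in Set.Ioo x (0:ℝ), -z ∂μ) + ∫ z in ({x} : Set ℝ), -z ∂μ := by
    rw [← hu]
    exact setIntegral_union hdisj (measurableSet_singleton x)
      (intOnNeg μ Set.Ioo_subset_Icc_self)
      (intOnNeg μ (Set.singleton_subset_iff.2 (Set.mem_Icc.2 ⟨le_rfl, le_rfl⟩)))
  rw [integral_singleton] at hint
  have h0 : (μ {x}).toReal • (-x) = 0 := by
    have : gM μ x = AM μ x + (μ {x}).toReal • (-x) := hint
    rw [h] at this; linarith [this]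
  have : (μ {x}).toReal = 0 := by
    rcases smul_eq_zero.1 h0 with h1 | h1
    · exact h1
    · exact absurd h1 (by intro hc; exact absurd (neg_eq_zero.1 hc) hx.ne)
  exact ((ENNReal.toReal_eq_zero_iff _).1 this).resolve_right (measure_ne_top μ _)

lemma gapM {x y : ℝ} (hy : y < 0) (hxy : x < y) (h : AM μ x = gM μ y) :
    μ (Set.Ioo x y) = 0 := by
  have hu : Set.Ioo x y ∪ Set.Ico y 0 = Set.Ioo x 0 := by
    ext z
    simp only [Set.mem_union, Set.mem_Ico, Set.mem_Ioo]
    constructor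
    · rintro (⟨h1, h2⟩ | ⟨h1, h2⟩)
      · exact ⟨h1, h2.trans hy⟩
      · exact ⟨hxy.trans_le h1, h2⟩
    · rintro ⟨h1, h2⟩
      rcases lt_or_ge z y with h3 | h3
      · exact Or.inl ⟨h1, h3⟩
      · exact Or.inr ⟨h3, h2⟩
  have hdisj : Disjoint (Set.Ioo x y) (Set.Ico y 0) :=
    Set.disjoint_left.mpr fun z hz1 hz2 => absurd hz2.1 (not_le.2 hz1.2)
  have hint : ∫ z in Set.Ioo x (0:ℝ), -z ∂μ
      = (∫ z in Set.Ioo x y, -z ∂μ) + ∫ z in Set.Ico y (0:ℝ), -z ∂μ := by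
    rw [← hu]
    exact setIntegral_union hdisj measurableSet_Ico
      (intOnNeg μ Set.Ioo_subset_Icc_self) (intOnNeg μ Set.Ico_subset_Icc_self)
  have hzero : ∫ z in Set.Ioo x y, -z ∂μ = 0 := by
    have : AM μ x = (∫ z in Set.Ioo x y, -z ∂μ) + gM μ y := hint
    rw [h] at this; linarith
  have hlow := setIntegral_ge_of_const_le (μ := μ) (f := fun z : ℝ => -z) (c := -y) (s := Set.Ioo x y)
    measurableSet_Ioo (measure_ne_top μ _) (fun z hz => by show -y ≤ -z; linarith [hz.2])
    (intOnNeg μ Set.Ioo_subset_Icc_self)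
  rw [hzero] at hlow
  simp only [Measure.real, smul_eq_mul] at hlow
  have ht : (μ (Set.Ioo x y)).toReal = 0 := by
    nlinarith [ENNReal.toReal_nonneg (a := μ (Set.Ioo x y))]
  exact ((ENNReal.toReal_eq_zero_iff _).1 ht).resolve_right (measure_ne_top μ _)

lemma null_of_pts_gaps {ν : Measure ℝ} {A : Set ℝ}
    (hpt : ∀ x ∈ A, ν {x} = 0)
    (hgap : ∀ x ∈ A, ∀ y ∈ A, x < y → ν (Set.Ioo x y) = 0) : ν A = 0 := by
  classical
  rcases A.eq_empty_or_nonempty with hA | ⟨a, ha⟩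
  · rw [hA]; exact measure_empty
  have hIoc : ∀ x ∈ A ∩ Set.Ioi a, ν (Set.Ioc a x) = 0 := by
    intro x hx
    rw [← Set.Ioo_union_right hx.2]
    exact measure_union_null (hgap a ha x hx.1 hx.2) (hpt x hx.1)
  have hIco : ∀ x ∈ A ∩ Set.Iio a, ν (Set.Ico x a) = 0 := by
    intro x hx
    rw [← Set.Ioo_union_left hx.2]
    exact measure_union_null (hgap x hx.1 a ha hx.2) (hpt x hx.1)
  have hupper : ν (A ∩ Set.Ioi a) = 0 := by
    set D : ℚ → Set ℝ := fun q =>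
      if hq : ∃ y, y ∈ A ∩ Set.Ioi a ∧ (q : ℝ) < y then Set.Ioc a hq.choose else ∅ with hD
    have hDnull : ∀ q, ν (D q) = 0 := by
      intro q
      rw [hD]
      dsimp only
      split_ifs with hq
      · exact hIoc _ hq.choose_spec.1
      · exact measure_empty
    have hM : ν {x | x ∈ A ∩ Set.Ioi a ∧ ∀ y ∈ A ∩ Set.Ioi a, y ≤ x} = 0 := by
      rcases Set.eq_empty_or_nonempty {x | x ∈ A ∩ Set.Ioi a ∧ ∀ y ∈ A ∩ Set.Ioi a, y ≤ x}
        with hE | ⟨m, hm⟩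
      · rw [hE]; exact measure_empty
      · refine measure_mono_null (fun z hz => ?_) (hpt m hm.1.1)
        have := le_antisymm (hz.2 m hm.1) (hm.2 z hz.1)
        simp [this]
    have hcover : A ∩ Set.Ioi a ⊆
        (⋃ q : ℚ, D q) ∪ {x | x ∈ A ∩ Set.Ioi a ∧ ∀ y ∈ A ∩ Set.Ioi a, y ≤ x} := by
      intro x hx
      by_cases hmax : ∀ y ∈ A ∩ Set.Ioi a, y ≤ x
      · exact Or.inr ⟨hx, hmax⟩
      · push_neg at hmax
        obtain ⟨y, hy, hxy⟩ := hmax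
        obtain ⟨q, hq1, hq2⟩ := exists_rat_btwn hxy
        left
        refine Set.mem_iUnion.2 ⟨q, ?_⟩
        have hq : ∃ y', y' ∈ A ∩ Set.Ioi a ∧ (q : ℝ) < y' := ⟨y, hy, hq2⟩
        rw [hD]
        dsimp only
        rw [dif_pos hq]
        exact ⟨hx.2, (hq1.trans hq.choose_spec.2).le⟩
    refine le_antisymm ?_ zero_le
    calc ν (A ∩ Set.Ioi a) ≤ ν ((⋃ q : ℚ, D q) ∪ _) := measure_mono hcover
    _ ≤ ν (⋃ q : ℚ, D q) + ν {x | x ∈ A ∩ Set.Ioi a ∧ ∀ y ∈ A ∩ Set.Ioi a, y ≤ x} :=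
        measure_union_le _ _
    _ = 0 := by rw [measure_iUnion_null hDnull, hM, add_zero]
  have hlower : ν (A ∩ Set.Iio a) = 0 := by
    set D : ℚ → Set ℝ := fun q =>
      if hq : ∃ y, y ∈ A ∩ Set.Iio a ∧ y < (q : ℝ) then Set.Ico hq.choose a else ∅ with hD
    have hDnull : ∀ q, ν (D q) = 0 := by
      intro q
      rw [hD]
      dsimp only
      split_ifs with hq
      · exact hIco _ hq.choose_spec.1
      · exact measure_empty
    have hM : ν {x | x ∈ A ∩ Set.Iio a ∧ ∀ y ∈ A ∩ Set.Iio a, x ≤ y} = 0 := by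
      rcases Set.eq_empty_or_nonempty {x | x ∈ A ∩ Set.Iio a ∧ ∀ y ∈ A ∩ Set.Iio a, x ≤ y}
        with hE | ⟨m, hm⟩
      · rw [hE]; exact measure_empty
      · refine measure_mono_null (fun z hz => ?_) (hpt m hm.1.1)
        have := le_antisymm (hm.2 z hz.1) (hz.2 m hm.1)
        simp [this]
    have hcover : A ∩ Set.Iio a ⊆
        (⋃ q : ℚ, D q) ∪ {x | x ∈ A ∩ Set.Iio a ∧ ∀ y ∈ A ∩ Set.Iio a, x ≤ y} := by
      intro x hx
      by_cases hmin : ∀ y ∈ A ∩ Set.Iio a, x ≤ y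
      · exact Or.inr ⟨hx, hmin⟩
      · push_neg at hmin
        obtain ⟨y, hy, hxy⟩ := hmin
        obtain ⟨q, hq1, hq2⟩ := exists_rat_btwn hxy
        left
        refine Set.mem_iUnion.2 ⟨q, ?_⟩
        have hq : ∃ y', y' ∈ A ∩ Set.Iio a ∧ y' < (q : ℝ) := ⟨y, hy, hq1⟩
        rw [hD]
        dsimp only
        rw [dif_pos hq]
        exact ⟨(hq.choose_spec.2.trans hq2).le, hx.2⟩
    refine le_antisymm ?_ zero_le
    calc ν (A ∩ Set.Iio a) ≤ ν ((⋃ q : ℚ, D q) ∪ _) := measure_mono hcover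
    _ ≤ ν (⋃ q : ℚ, D q) + ν {x | x ∈ A ∩ Set.Iio a ∧ ∀ y ∈ A ∩ Set.Iio a, x ≤ y} :=
        measure_union_le _ _
    _ = 0 := by rw [measure_iUnion_null hDnull, hM, add_zero]
  have hsplit : A ⊆ (A ∩ Set.Iio a) ∪ ({a} ∪ (A ∩ Set.Ioi a)) := by
    intro z hz
    rcases lt_trichotomy z a with h | h | h
    · exact Or.inl ⟨hz, h⟩
    · exact Or.inr (Or.inl h)
    · exact Or.inr (Or.inr ⟨hz, h⟩)
  refine measure_mono_null hsplit ?_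
  exact measure_union_null hlower (measure_union_null (hpt a ha) hupper)

lemma G_eq_gP {x : ℝ} (hx : 0 ≤ x) : G μ x = gP μ x := by rw [G, if_pos hx]; rfl

lemma G_eq_gM {x : ℝ} (hx : x < 0) : G μ x = gM μ x := by rw [G, if_neg (not_le.2 hx)]; rfl

lemma Gtilde_eq_pos {x u : ℝ} (hx : 0 < x) :
    Gtilde μ x u = AP μ x + (gP μ x - AP μ x) * u := by
  rw [Gtilde, if_pos hx.le, leftLim_G_pos μ hx, G_eq_gP μ hx.le]

lemma Gtilde_eq_neg {x u : ℝ} (hx : x < 0) :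
    Gtilde μ x u = AM μ x + (gM μ x - AM μ x) * u := by
  rw [Gtilde, if_neg (not_le.2 hx), rightLim_G_neg μ hx, G_eq_gM μ hx]

lemma Gtilde_zero (u : ℝ) : Gtilde μ 0 u = 0 := by
  have hG0 : G μ 0 = 0 := by
    rw [G, if_pos le_rfl, Set.Ioc_self, Measure.restrict_empty, integral_zero_measure]
  rw [Gtilde, if_pos le_rfl, leftLim_G_zero μ, hG0]
  ring

end GtildeAux

open GtildeAux

/-- `P(X ≠ 0, G̃(X,U) = h) = 0` for every real `h`; hence the distribution of `G̃(X,U)`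
may have an atom only at `0`. -/
theorem Gtilde_no_atoms
    {Ω : Type*} [MeasurableSpace Ω] (P : Measure Ω) [IsProbabilityMeasure P]
    (X U : Ω → ℝ) (hX : Measurable X) (hU : Measurable U)
    (hindep : IndepFun X U P)
    (hUunif : Measure.map U P = volume.restrict (Set.Icc (0:ℝ) 1))
    (hint : Integrable X P) (hmean : ∫ ω, X ω ∂P = 0) :
    (∀ h : ℝ, P {ω | X ω ≠ 0 ∧ Gtilde (Measure.map X P) (X ω) (U ω) = h} = 0) ∧
    (∀ h : ℝ, h ≠ 0 → P {ω | Gtilde (Measure.map X P) (X ω) (U ω) = h} = 0) := by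
  set μ : Measure ℝ := Measure.map X P with hμdef
  haveI : IsProbabilityMeasure μ := Measure.isProbabilityMeasure_map hX.aemeasurable
  set ν : Measure ℝ := volume.restrict (Set.Icc (0:ℝ) 1) with hνdef
  haveI hνprob : IsProbabilityMeasure ν := by
    constructor
    rw [hνdef, Measure.restrict_apply_univ, Real.volume_Icc]
    norm_num
  have key : ∀ h : ℝ, P {ω | X ω ≠ 0 ∧ Gtilde μ (X ω) (U ω) = h} = 0 := by
    intro h
    set S : Set (ℝ × ℝ) := {p | (0 < p.1 ∧ AP μ p.1 + (gP μ p.1 - AP μ p.1) * p.2 = h) ∨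
      (p.1 < 0 ∧ AM μ p.1 + (gM μ p.1 - AM μ p.1) * p.2 = h)} with hSdef
    have hgP : Measurable (gP μ) := (gP_mono μ).measurable
    have hAP : Measurable (AP μ) := (AP_mono μ).measurable
    have hgM : Measurable (gM μ) := (gM_anti μ).measurable
    have hAM : Measurable (AM μ) := (AM_anti μ).measurable
    have hf1 : Measurable fun p : ℝ × ℝ => AP μ p.1 + (gP μ p.1 - AP μ p.1) * p.2 :=
      ((hAP.comp measurable_fst).add
        (((hgP.comp measurable_fst).sub (hAP.comp measurable_fst)).mul measurable_snd))
    have hf2 : Measurable fun p : ℝ × ℝ => AM μ p.1 + (gM μ p.1 - AM μ p.1) * p.2 :=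
      ((hAM.comp measurable_fst).add
        (((hgM.comp measurable_fst).sub (hAM.comp measurable_fst)).mul measurable_snd))
    have hSm : MeasurableSet S := by
      rw [hSdef, Set.setOf_or]
      apply MeasurableSet.union
      · rw [Set.setOf_and]
        exact (measurable_fst measurableSet_Ioi).inter (hf1 (measurableSet_singleton h))
      · rw [Set.setOf_and]
        exact (measurable_fst measurableSet_Iio).inter (hf2 (measurableSet_singleton h))
    have hev : {ω | X ω ≠ 0 ∧ Gtilde μ (X ω) (U ω) = h} = (fun ω => (X ω, U ω)) ⁻¹' S := by
      ext ω
      simp only [Set.mem_setOf_eq, Set.mem_preimage, hSdef]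
      constructor
      · rintro ⟨hne, hG⟩
        rcases hne.lt_or_gt with hlt | hlt
        · exact Or.inr ⟨hlt, by rw [← Gtilde_eq_neg μ hlt]; exact hG⟩
        · exact Or.inl ⟨hlt, by rw [← Gtilde_eq_pos μ hlt]; exact hG⟩
      · rintro (⟨hlt, hG⟩ | ⟨hlt, hG⟩)
        · exact ⟨ne_of_gt hlt, by rw [Gtilde_eq_pos μ hlt]; exact hG⟩
        · exact ⟨ne_of_lt hlt, by rw [Gtilde_eq_neg μ hlt]; exact hG⟩
    rw [hev, ← Measure.map_apply (hX.prodMk hU) hSm,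
      (indepFun_iff_map_prod_eq_prod_map_map hX.aemeasurable hU.aemeasurable).mp hindep,
      hUunif, Measure.prod_apply hSm]
    set T : Set ℝ := {x | (0 < x ∧ gP μ x = AP μ x ∧ AP μ x = h) ∨
      (x < 0 ∧ gM μ x = AM μ x ∧ AM μ x = h)} with hTdef
    have hTm : MeasurableSet T := by
      rw [hTdef, Set.setOf_or]
      apply MeasurableSet.union
      · rw [Set.setOf_and, Set.setOf_and]
        exact measurableSet_Ioi.inter ((measurableSet_eq_fun hgP hAP).inter
          (hAP (measurableSet_singleton h)))
      · rw [Set.setOf_and, Set.setOf_and]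
        exact measurableSet_Iio.inter ((measurableSet_eq_fun hgM hAM).inter
          (hAM (measurableSet_singleton h)))
    have hbound : ∀ x : ℝ, ν (Prod.mk x ⁻¹' S) ≤ T.indicator (fun _ => (1 : ℝ≥0∞)) x := by
      intro x
      by_cases hxT : x ∈ T
      · rw [Set.indicator_of_mem hxT]
        calc ν (Prod.mk x ⁻¹' S) ≤ ν Set.univ := measure_mono (Set.subset_univ _)
        _ = 1 := measure_univ
      · rw [Set.indicator_of_notMem hxT]
        refine le_of_eq ?_
        rcases lt_trichotomy x 0 with hx | hx | hx
        · by_cases hc : gM μ x - AM μ x = 0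
          · have hAMh : AM μ x ≠ h := by
              intro he
              exact hxT (Or.inr ⟨hx, sub_eq_zero.1 hc, he⟩)
            have : Prod.mk x ⁻¹' S = ∅ := by
              ext u
              simp only [Set.mem_preimage, hSdef, Set.mem_setOf_eq,
                Set.mem_empty_iff_false, iff_false]
              rintro (⟨h1, _⟩ | ⟨_, h2⟩)
              · exact absurd h1 (not_lt.2 hx.le)
              · rw [hc, zero_mul, add_zero] at h2
                exact hAMh h2
            rw [this, measure_empty]
          · refine measure_mono_null (t := {(h - AM μ x) / (gM μ x - AM μ x)}) ?_ ?_
            · intro u hu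
              simp only [Set.mem_preimage, hSdef, Set.mem_setOf_eq] at hu
              rcases hu with ⟨h1, _⟩ | ⟨_, h2⟩
              · exact absurd h1 (not_lt.2 hx.le)
              · simp only [Set.mem_singleton_iff]
                rw [eq_div_iff hc]
                linear_combination h2
            · rw [hνdef, Measure.restrict_apply (measurableSet_singleton _)]
              exact measure_mono_null Set.inter_subset_left Real.volume_singleton
        · subst hx
          have : Prod.mk (0:ℝ) ⁻¹' S = ∅ := by
            ext u
            simp only [Set.mem_preimage, hSdef, Set.mem_setOf_eq,
              Set.mem_empty_iff_false, iff_false]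
            rintro (⟨h1, _⟩ | ⟨h1, _⟩) <;> exact lt_irrefl 0 h1
          rw [this, measure_empty]
        · by_cases hc : gP μ x - AP μ x = 0
          · have hAPh : AP μ x ≠ h := by
              intro he
              exact hxT (Or.inl ⟨hx, sub_eq_zero.1 hc, he⟩)
            have : Prod.mk x ⁻¹' S = ∅ := by
              ext u
              simp only [Set.mem_preimage, hSdef, Set.mem_setOf_eq,
                Set.mem_empty_iff_false, iff_false]
              rintro (⟨_, h2⟩ | ⟨h1, _⟩)
              · rw [hc, zero_mul, add_zero] at h2
                exact hAPh h2
              · exact absurd h1 (not_lt.2 hx.le)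
            rw [this, measure_empty]
          · refine measure_mono_null (t := {(h - AP μ x) / (gP μ x - AP μ x)}) ?_ ?_
            · intro u hu
              simp only [Set.mem_preimage, hSdef, Set.mem_setOf_eq] at hu
              rcases hu with ⟨_, h2⟩ | ⟨h1, _⟩
              · simp only [Set.mem_singleton_iff]
                rw [eq_div_iff hc]
                linear_combination h2
              · exact absurd h1 (not_lt.2 hx.le)
            · rw [hνdef, Measure.restrict_apply (measurableSet_singleton _)]
              exact measure_mono_null Set.inter_subset_left Real.volume_singleton
    have hT : μ T = 0 := by
      rw [hTdef, Set.setOf_or]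
      apply measure_union_null
      · apply null_of_pts_gaps
        · intro x hx
          exact jumpP μ hx.1 hx.2.1
        · intro x hx y hy hxy
          refine gapP μ hx.1 hxy ?_
          rw [hy.2.2, ← hx.2.2, hx.2.1]
      · apply null_of_pts_gaps
        · intro x hx
          exact jumpM μ hx.1 hx.2.1
        · intro x hx y hy hxy
          refine gapM μ hy.1 hxy ?_
          rw [hx.2.2, ← hy.2.2, hy.2.1]
    have hle : ∫⁻ x, ν (Prod.mk x ⁻¹' S) ∂μ ≤ μ T := by
      calc ∫⁻ x, ν (Prod.mk x ⁻¹' S) ∂μ ≤ ∫⁻ x, T.indicator (fun _ => (1:ℝ≥0∞)) x ∂μ :=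
        lintegral_mono hbound
      _ = μ T := lintegral_indicator_one hTm
    exact le_antisymm (hle.trans hT.le) zero_le
  refine ⟨key, fun h hne => measure_mono_null ?_ (key h)⟩
  intro ω hω
  simp only [Set.mem_setOf_eq] at hω ⊢
  refine ⟨fun h0 => ?_, hω⟩
  rw [h0, Gtilde_zero μ] at hω
  exact hne hω.symm
end
end

section
/- Let Y be a random variable with distribution P(Y ∈ A) = E[|X|·1{X∈A}]/E|X| (size-biased by |X|), independent of the uniform variable U. Then P(Y = 0) = 0 and G̃(Y,U) is uniformly distributed on [0, m], where m = (1/2)E|X|. -/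
open MeasureTheory ProbabilityTheory Set Function

noncomputable section

open Filter


/-- If every initial segment of `A` inside `A` is null, then `A` is null. -/
lemma null_of_null_initial (ν : Measure ℝ) (A : Set ℝ)
    (h : ∀ y ∈ A, ν (A ∩ Iic y) = 0) : ν A = 0 := by
  rcases A.eq_empty_or_nonempty with rfl | hA
  · simp
  by_cases hb : BddAbove A
  · by_cases hs : sSup A ∈ A
    · have hAs : A = A ∩ Iic (sSup A) := by
        rw [eq_comm, inter_eq_left]
        exact fun a ha => le_csSup hb ha
      rw [hAs]; exact h _ hs
    · have hex : ∀ n : ℕ, ∃ y ∈ A, sSup A - 1/(n+1) < y := by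
        intro n
        refine exists_lt_of_lt_csSup hA ?_
        have : (0:ℝ) < 1/(n+1) := by positivity
        linarith
      choose y hyA hy using hex
      have hcover : A ⊆ ⋃ n, A ∩ Iic (y n) := by
        intro a ha
        have halt : a < sSup A :=
          lt_of_le_of_ne (le_csSup hb ha) (fun he => hs (he ▸ ha))
        obtain ⟨n, hn⟩ : ∃ n : ℕ, 1/((n:ℝ)+1) < sSup A - a :=
          exists_nat_one_div_lt (by linarith)
        have h2 := hy n
        have h3 : a < y n := by linarith
        exact mem_iUnion.2 ⟨n, ha, h3.le⟩
      exact measure_mono_null hcover (measure_iUnion_null fun n => h _ (hyA n))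
  · have hex : ∀ n : ℕ, ∃ y ∈ A, (n:ℝ) ≤ y := by
      intro n
      by_contra hcon
      push_neg at hcon
      exact hb ⟨n, fun a ha => (hcon a ha).le⟩
    choose y hyA hy using hex
    have hcover : A ⊆ ⋃ n, A ∩ Iic (y n) := by
      intro a ha
      obtain ⟨n, hn⟩ := exists_nat_ge a
      exact mem_iUnion.2 ⟨n, ha, hn.trans (hy n)⟩
    exact measure_mono_null hcover (measure_iUnion_null fun n => h _ (hyA n))

lemma iUnion_Iic_sub (q : ℝ) : ⋃ n : ℕ, Iic (q - 1/(n+1)) = Iio q := by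
  ext x
  simp only [mem_iUnion, mem_Iic, mem_Iio]
  constructor
  · rintro ⟨n, hn⟩
    have : (0:ℝ) < 1/((n:ℝ)+1) := by positivity
    linarith
  · intro hx
    obtain ⟨n, hn⟩ := exists_nat_one_div_lt (show (0:ℝ) < q - x by linarith)
    exact ⟨n, by linarith⟩

lemma iInter_Iic_add (q : ℝ) : ⋂ n : ℕ, Iic (q + 1/(n+1)) = Iic q := by
  ext x
  simp only [mem_iInter, mem_Iic]
  constructor
  · intro hx
    by_contra hcon
    push_neg at hcon
    obtain ⟨n, hn⟩ := exists_nat_one_div_lt (show (0:ℝ) < x - q by linarith)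
    have := hx n
    linarith
  · intro hx n
    have : (0:ℝ) < 1/((n:ℝ)+1) := by positivity
    linarith

lemma mono_Iic_sub (q : ℝ) : Monotone (fun n : ℕ => Iic (q - 1/((n:ℝ)+1))) := by
  intro n m hnm
  apply Iic_subset_Iic.2
  have h0 : (n:ℝ) ≤ (m:ℝ) := Nat.cast_le.mpr hnm
  have h1 : ((n:ℝ)+1) ≤ ((m:ℝ)+1) := by linarith
  have := one_div_le_one_div_of_le (by positivity : (0:ℝ) < (n:ℝ)+1) h1
  linarith

lemma anti_Iic_add (q : ℝ) : Antitone (fun n : ℕ => Iic (q + 1/((n:ℝ)+1))) := by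
  intro n m hnm
  apply Iic_subset_Iic.2
  have h0 : (n:ℝ) ≤ (m:ℝ) := Nat.cast_le.mpr hnm
  have h1 : ((n:ℝ)+1) ≤ ((m:ℝ)+1) := by linarith
  have := one_div_le_one_div_of_le (by positivity : (0:ℝ) < (n:ℝ)+1) h1
  linarith

/-- measure of `Iio` as a limit of `Iic`s from inside. -/
lemma tendsto_measure_Iic_sub (ν : Measure ℝ) (q : ℝ) :
    Tendsto (fun n : ℕ => ν (Iic (q - 1/((n:ℝ)+1)))) atTop (nhds (ν (Iio q))) := by
  have := tendsto_measure_iUnion_atTop (μ := ν) (mono_Iic_sub q)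
  rwa [iUnion_Iic_sub] at this

lemma tendsto_measure_Iic_add (ν : Measure ℝ) [IsFiniteMeasure ν] (q : ℝ) :
    Tendsto (fun n : ℕ => ν (Iic (q + 1/((n:ℝ)+1)))) atTop (nhds (ν (Iic q))) := by
  have := tendsto_measure_iInter_atTop (μ := ν)
    (fun n => (measurableSet_Iic).nullMeasurableSet) (anti_Iic_add q)
    ⟨0, measure_ne_top _ _⟩
  rwa [iInter_Iic_add] at this

lemma tendsto_measure_Iic_atTop' (ν : Measure ℝ) :
    Tendsto (fun n : ℕ => ν (Iic ((n:ℝ)))) atTop (nhds (ν univ)) := by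
  have hmono : Monotone (fun n : ℕ => Iic ((n:ℝ))) := by
    intro n m h; exact Iic_subset_Iic.2 (by exact_mod_cast h)
  have := tendsto_measure_iUnion_atTop (μ := ν) hmono
  have huniv : ⋃ n : ℕ, Iic ((n:ℝ)) = univ := by
    ext x; simp only [mem_iUnion, mem_Iic, mem_univ, iff_true]
    exact exists_nat_ge x
  rwa [huniv] at this

lemma tendsto_measure_Iic_atBot' (ν : Measure ℝ) [IsFiniteMeasure ν] :
    Tendsto (fun n : ℕ => ν (Iic (-(n:ℝ)))) atTop (nhds 0) := by
  have hanti : Antitone (fun n : ℕ => Iic (-(n:ℝ))) := by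
    intro n m h; exact Iic_subset_Iic.2 (by exact_mod_cast neg_le_neg (by exact_mod_cast h))
  have := tendsto_measure_iInter_atTop (μ := ν)
    (fun n => (measurableSet_Iic).nullMeasurableSet) hanti ⟨0, measure_ne_top _ _⟩
  have hempty : ⋂ n : ℕ, Iic (-(n:ℝ)) = ∅ := by
    ext x
    simp only [mem_iInter, mem_Iic, mem_empty_iff_false, iff_false, not_forall, not_le]
    obtain ⟨n, hn⟩ := exists_nat_gt (-x)
    exact ⟨n, by linarith⟩
  rw [hempty] at this
  simpa [Function.comp_def] using this

/-- The uniform measure of the section `{u | Fl + Δ u ≤ t}`. -/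
lemma inner_eq (Fl Δ t : ℝ) (hΔ : 0 ≤ Δ) :
    volume.restrict (Icc (0:ℝ) 1) {u : ℝ | Fl + Δ * u ≤ t} =
      if Δ = 0 then (if Fl ≤ t then 1 else 0)
      else ENNReal.ofReal (min ((t - Fl) / Δ) 1) := by
  rw [Measure.restrict_apply' measurableSet_Icc]
  rcases eq_or_lt_of_le hΔ with h0 | h0
  · rw [if_pos h0.symm]
    by_cases hFl : Fl ≤ t
    · rw [if_pos hFl]
      have hset : {u : ℝ | Fl + Δ * u ≤ t} = univ := by
        ext u; simp only [mem_setOf_eq, mem_univ, iff_true, ← h0]; linarith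
      rw [hset, univ_inter, Real.volume_Icc]
      norm_num
    · rw [if_neg hFl]
      have hset : {u : ℝ | Fl + Δ * u ≤ t} = ∅ := by
        ext u; simp only [mem_setOf_eq, mem_empty_iff_false, iff_false, ← h0]
        intro hc; exact hFl (by linarith)
      rw [hset, empty_inter, measure_empty]
  · rw [if_neg (ne_of_gt h0)]
    have hset : {u : ℝ | Fl + Δ * u ≤ t} = Iic ((t - Fl)/Δ) := by
      ext u
      simp only [mem_setOf_eq, mem_Iic]
      rw [le_div_iff₀ h0]
      constructor <;> intro <;> nlinarith
    rw [hset]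
    have hset2 : Iic ((t - Fl)/Δ) ∩ Icc 0 1 = Icc 0 (min ((t-Fl)/Δ) 1) := by
      ext u
      simp only [mem_inter_iff, mem_Iic, mem_Icc, le_min_iff]
      tauto
    rw [hset2, Real.volume_Icc, sub_zero]
/-- Core: randomized probability-integral-transform computation. -/
lemma core_lintegral (ν : Measure ℝ) [IsFiniteMeasure ν] (t : ℝ) :
    ∫⁻ y, volume.restrict (Icc (0:ℝ) 1)
        {u : ℝ | (ν (Iio y)).toReal + (ν {y}).toReal * u ≤ t} ∂ν
      = min (ENNReal.ofReal t) (ν univ) := by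
  set I : ℝ → ENNReal := fun y => volume.restrict (Icc (0:ℝ) 1)
      {u : ℝ | (ν (Iio y)).toReal + (ν {y}).toReal * u ≤ t} with hI
  have hIeq : ∀ y, I y =
      if (ν {y}).toReal = 0 then (if (ν (Iio y)).toReal ≤ t then 1 else 0)
      else ENNReal.ofReal (min ((t - (ν (Iio y)).toReal) / (ν {y}).toReal) 1) :=
    fun y => inner_eq _ _ t ENNReal.toReal_nonneg
  have hsplit : ∀ y : ℝ, ν (Iic y) = ν (Iio y) + ν {y} := by
    intro y
    rw [← Iio_union_right, measure_union (by simp) (measurableSet_singleton y)]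
  have hFsplit : ∀ y : ℝ, (ν (Iic y)).toReal = (ν (Iio y)).toReal + (ν {y}).toReal := by
    intro y
    rw [hsplit y, ENNReal.toReal_add (measure_ne_top _ _) (measure_ne_top _ _)]
  rcases le_or_gt t 0 with ht | ht
  · -- t ≤ 0 : both sides vanish
    have hmin : min (ENNReal.ofReal t) (ν univ) = 0 := by
      rw [ENNReal.ofReal_eq_zero.2 ht]; exact min_eq_left zero_le
    rw [hmin]
    have hB : ν {y : ℝ | ν (Iic y) = 0} = 0 := by
      apply null_of_null_initial
      intro y hy
      exact measure_mono_null (inter_subset_right) hy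
    have hae : ∀ᵐ y ∂ν, I y = 0 := by
      rw [MeasureTheory.ae_iff]
      refine measure_mono_null ?_ hB
      intro y hy
      simp only [mem_setOf_eq] at hy ⊢
      rw [hIeq y] at hy
      by_cases hΔ : (ν {y}).toReal = 0
      · rw [if_pos hΔ] at hy
        by_cases hFl : (ν (Iio y)).toReal ≤ t
        · have h1 : (ν (Iio y)).toReal = 0 :=
            le_antisymm (hFl.trans ht) ENNReal.toReal_nonneg
          rw [hsplit y, ((ENNReal.toReal_eq_zero_iff _).1 h1).resolve_right (measure_ne_top _ _),
            ((ENNReal.toReal_eq_zero_iff _).1 hΔ).resolve_right (measure_ne_top _ _), add_zero]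
        · rw [if_neg hFl] at hy; exact absurd rfl hy
      · rw [if_neg hΔ] at hy
        have hΔpos : 0 < (ν {y}).toReal :=
          lt_of_le_of_ne ENNReal.toReal_nonneg (Ne.symm hΔ)
        have : (t - (ν (Iio y)).toReal) / (ν {y}).toReal ≤ 0 := by
          apply div_nonpos_of_nonpos_of_nonneg _ hΔpos.le
          have := ENNReal.toReal_nonneg (a := ν (Iio y))
          linarith
        have : min ((t - (ν (Iio y)).toReal) / (ν {y}).toReal) 1 ≤ 0 :=
          le_trans (min_le_left _ _) this
        exact absurd (ENNReal.ofReal_eq_zero.2 this) hy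
    calc ∫⁻ y, I y ∂ν = ∫⁻ _, 0 ∂ν := lintegral_congr_ae hae
      _ = 0 := lintegral_zero
  rcases le_or_gt (ν univ) (ENNReal.ofReal t) with hM | hM
  · -- t ≥ total mass : integrand is 1
    rw [min_eq_right hM]
    have hone : ∀ y, I y = 1 := by
      intro y
      rw [hIeq y]
      have hFt : (ν (Iic y)).toReal ≤ t := by
        refine le_trans (ENNReal.toReal_mono (measure_ne_top _ _) (measure_mono (subset_univ _))) ?_
        exact ENNReal.toReal_le_of_le_ofReal ht.le hM
      by_cases hΔ : (ν {y}).toReal = 0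
      · rw [if_pos hΔ, if_pos]
        rw [hFsplit y, hΔ, add_zero] at hFt
        exact hFt
      · rw [if_neg hΔ]
        have hΔpos : 0 < (ν {y}).toReal :=
          lt_of_le_of_ne ENNReal.toReal_nonneg (Ne.symm hΔ)
        have h1 : (1:ℝ) ≤ (t - (ν (Iio y)).toReal) / (ν {y}).toReal := by
          rw [le_div_iff₀ hΔpos, one_mul]
          have := hFsplit y
          linarith
        rw [min_eq_right h1]
        exact ENNReal.ofReal_one
    calc ∫⁻ y, I y ∂ν = ∫⁻ _, 1 ∂ν := lintegral_congr (fun y => hone y)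
      _ = ν univ := lintegral_one
  · -- main case : 0 < t < total mass
    rw [min_eq_left hM.le]
    set S : Set ℝ := {y | ENNReal.ofReal t ≤ ν (Iic y)} with hS
    have hSne : S.Nonempty := by
      have := (tendsto_measure_Iic_atTop' ν).eventually (eventually_gt_nhds hM)
      obtain ⟨n, hn⟩ := this.exists
      exact ⟨n, hn.le⟩
    have hSbdd : BddBelow S := by
      have h0t : (0:ENNReal) < ENNReal.ofReal t := ENNReal.ofReal_pos.2 ht
      have := (tendsto_measure_Iic_atBot' ν).eventually (eventually_lt_nhds h0t)
      obtain ⟨n, hn⟩ := this.exists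
      refine ⟨-(n:ℝ), fun y hy => ?_⟩
      by_contra hcon
      push_neg at hcon
      have : ν (Iic y) ≤ ν (Iic (-(n:ℝ))) := measure_mono (Iic_subset_Iic.2 hcon.le)
      exact absurd (hy.trans this) (not_le.2 hn)
    set q : ℝ := sInf S with hq
    have hqIic : ENNReal.ofReal t ≤ ν (Iic q) := by
      refine ge_of_tendsto (tendsto_measure_Iic_add ν q) (Eventually.of_forall fun n => ?_)
      obtain ⟨y, hyS, hyq⟩ := exists_lt_of_csInf_lt hSne
        (lt_add_of_pos_right q (by positivity : (0:ℝ) < 1/((n:ℝ)+1)))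
      exact le_trans hyS (measure_mono (Iic_subset_Iic.2 hyq.le))
    have hqIio : ν (Iio q) ≤ ENNReal.ofReal t := by
      refine le_of_tendsto (tendsto_measure_Iic_sub ν q) (Eventually.of_forall fun n => ?_)
      have hnotS : q - 1/((n:ℝ)+1) ∉ S := by
        intro hmem
        have := csInf_le hSbdd hmem
        have h1 : (0:ℝ) < 1/((n:ℝ)+1) := by positivity
        rw [← hq] at this
        linarith
      simp only [hS, mem_setOf_eq, not_le] at hnotS
      exact hnotS.le
    have hFlq : (ν (Iio q)).toReal ≤ t :=
      ENNReal.toReal_le_of_le_ofReal ht.le hqIio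
    have hFq : t ≤ (ν (Iic q)).toReal :=
      (ENNReal.ofReal_le_iff_le_toReal (measure_ne_top _ _)).1 hqIic
    -- decompose the integral
    have hdecomp : (univ : Set ℝ) = Iio q ∪ ({q} ∪ Ioi q) := by
      ext x
      simp only [mem_univ, mem_union, mem_Iio, mem_singleton_iff, mem_Ioi, true_iff]
      rcases lt_trichotomy x q with h | h | h
      · exact Or.inl h
      · exact Or.inr (Or.inl h)
      · exact Or.inr (Or.inr h)
    have hdisj1 : Disjoint (Iio q) ({q} ∪ Ioi q) := by
      rw [disjoint_union_right]
      constructor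
      · simp [disjoint_singleton_right]
      · exact disjoint_left.mpr fun a ha hb => (lt_asymm (mem_Iio.1 ha) (mem_Ioi.1 hb)).elim
    have hdisj2 : Disjoint ({q} : Set ℝ) (Ioi q) := by simp
    have hIio : ∫⁻ y in Iio q, I y ∂ν = ν (Iio q) := by
      rw [setLIntegral_congr_fun measurableSet_Iio
        (fun y (hy : y < q) => ?_), setLIntegral_one]
      -- show I y = 1 for y < q
      have hynotS : y ∉ S := by
        intro hmem
        exact absurd (csInf_le hSbdd hmem) (not_le.2 hy)
      simp only [hS, mem_setOf_eq, not_le] at hynotS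
      have hFt : (ν (Iic y)).toReal < t :=
        (ENNReal.lt_ofReal_iff_toReal_lt (measure_ne_top _ _)).1 hynotS
      rw [hIeq y]
      by_cases hΔ : (ν {y}).toReal = 0
      · rw [if_pos hΔ, if_pos]
        rw [hFsplit y, hΔ, add_zero] at hFt
        exact hFt.le
      · rw [if_neg hΔ]
        have hΔpos : 0 < (ν {y}).toReal :=
          lt_of_le_of_ne ENNReal.toReal_nonneg (Ne.symm hΔ)
        have h1 : (1:ℝ) ≤ (t - (ν (Iio y)).toReal) / (ν {y}).toReal := by
          rw [le_div_iff₀ hΔpos, one_mul]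
          have := hFsplit y
          linarith
        rw [min_eq_right h1]
        exact ENNReal.ofReal_one
    have hsing : ∫⁻ y in {q}, I y ∂ν = ENNReal.ofReal (t - (ν (Iio q)).toReal) := by
      rw [lintegral_singleton]
      by_cases hΔ : (ν {q}).toReal = 0
      · have hν0 : ν {q} = 0 :=
          ((ENNReal.toReal_eq_zero_iff _).1 hΔ).resolve_right (measure_ne_top _ _)
        have hFlF : (ν (Iio q)).toReal = (ν (Iic q)).toReal := by
          rw [hFsplit q, hΔ, add_zero]
        have : t - (ν (Iio q)).toReal ≤ 0 := by rw [hFlF]; linarith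
        rw [hν0, mul_zero, ENNReal.ofReal_eq_zero.2 this]
      · have hΔpos : 0 < (ν {q}).toReal :=
          lt_of_le_of_ne ENNReal.toReal_nonneg (Ne.symm hΔ)
        rw [hIeq q, if_neg hΔ]
        have hle1 : (t - (ν (Iio q)).toReal) / (ν {q}).toReal ≤ 1 := by
          rw [div_le_one hΔpos]
          have := hFsplit q
          linarith
        have hnn : 0 ≤ (t - (ν (Iio q)).toReal) / (ν {q}).toReal :=
          div_nonneg (by linarith) hΔpos.le
        rw [min_eq_left hle1]
        nth_rewrite 2 [← ENNReal.ofReal_toReal (measure_ne_top ν {q})]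
        rw [← ENNReal.ofReal_mul hnn, div_mul_cancel₀ _ hΔ]
    have hIoi : ∫⁻ y in Ioi q, I y ∂ν = 0 := by
      set A : Set ℝ := {y | q < y ∧ ν (Iic y) = ENNReal.ofReal t} with hA
      have hqt : ν (Iic q) = ENNReal.ofReal t → True := fun _ => trivial
      have hAnull : ν A = 0 := by
        apply null_of_null_initial
        intro y hy
        have hsub : A ∩ Iic y ⊆ Ioc q y := fun a ⟨haA, hay⟩ => ⟨haA.1, hay⟩
        refine measure_mono_null hsub ?_
        have hqy : ν (Iic q) = ENNReal.ofReal t := by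
          refine le_antisymm ?_ hqIic
          rw [← hy.2]
          exact measure_mono (Iic_subset_Iic.2 hy.1.le)
        have hunion : Iic q ∪ Ioc q y = Iic y := Iic_union_Ioc_eq_Iic hy.1.le
        have h5 : ν (Iic q ∪ Ioc q y) = ν (Iic q) + ν (Ioc q y) :=
          measure_union (Iic_disjoint_Ioc le_rfl) measurableSet_Ioc
        rw [hunion, hy.2, hqy] at h5
        exact ((ENNReal.add_right_inj ENNReal.ofReal_ne_top).1
          (by rw [← h5, add_zero])).symm
      have hzero : ∀ y ∈ Ioi q, I y ≠ 0 → y ∈ A := by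
        intro y (hy : q < y) hIy
        have hFly : t ≤ (ν (Iio y)).toReal := by
          have h1 : ENNReal.ofReal t ≤ ν (Iio y) :=
            le_trans hqIic (measure_mono (fun a (ha : a ≤ q) => lt_of_le_of_lt ha hy))
          exact (ENNReal.ofReal_le_iff_le_toReal (measure_ne_top _ _)).1 h1
        rw [hIeq y] at hIy
        by_cases hΔ : (ν {y}).toReal = 0
        · rw [if_pos hΔ] at hIy
          by_cases hFl : (ν (Iio y)).toReal ≤ t
          · have heq : (ν (Iio y)).toReal = t := le_antisymm hFl hFly
            have hνy : ν {y} = 0 :=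
              ((ENNReal.toReal_eq_zero_iff _).1 hΔ).resolve_right (measure_ne_top _ _)
            refine ⟨hy, ?_⟩
            rw [hsplit y, hνy, add_zero, ← heq, ENNReal.ofReal_toReal (measure_ne_top _ _)]
          · rw [if_neg hFl] at hIy; exact absurd rfl hIy
        · rw [if_neg hΔ] at hIy
          have hΔpos : 0 < (ν {y}).toReal :=
            lt_of_le_of_ne ENNReal.toReal_nonneg (Ne.symm hΔ)
          have hle : (t - (ν (Iio y)).toReal) / (ν {y}).toReal ≤ 0 :=
            div_nonpos_of_nonpos_of_nonneg (by linarith) hΔpos.le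
          have : min ((t - (ν (Iio y)).toReal) / (ν {y}).toReal) 1 ≤ 0 :=
            le_trans (min_le_left _ _) hle
          exact absurd (ENNReal.ofReal_eq_zero.2 this) hIy
      have hrestr : (fun y => I y) =ᵐ[ν.restrict (Ioi q)] 0 := by
        rw [Filter.EventuallyEq, MeasureTheory.ae_iff]
        rw [Measure.restrict_apply' measurableSet_Ioi]
        refine measure_mono_null ?_ hAnull
        intro y ⟨hy1, hy2⟩
        exact hzero y hy2 hy1
      rw [lintegral_congr_ae hrestr]
      simp
    calc ∫⁻ y, I y ∂ν
        = ∫⁻ y in Iio q ∪ ({q} ∪ Ioi q), I y ∂ν := by rw [← hdecomp, setLIntegral_univ]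
      _ = ∫⁻ y in Iio q, I y ∂ν + (∫⁻ y in {q}, I y ∂ν + ∫⁻ y in Ioi q, I y ∂ν) := by
          rw [lintegral_union (by exact (measurableSet_singleton q).union measurableSet_Ioi) hdisj1,
            lintegral_union measurableSet_Ioi hdisj2]
      _ = ν (Iio q) + (ENNReal.ofReal (t - (ν (Iio q)).toReal) + 0) := by
          rw [hIio, hsing, hIoi]
      _ = ENNReal.ofReal t := by
          rw [add_zero]
          nth_rewrite 1 [← ENNReal.ofReal_toReal (measure_ne_top ν (Iio q))]
          rw [← ENNReal.ofReal_add ENNReal.toReal_nonneg (by linarith)]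
          congr 1
          ring
open Filter

lemma iInter_Ici_neg : ⋂ n : ℕ, Ici (-(1/((n:ℝ)+1))) = Ici (0:ℝ) := by
  ext x
  simp only [mem_iInter, mem_Ici]
  constructor
  · intro h
    by_contra hc
    push_neg at hc
    obtain ⟨n, hn⟩ := exists_nat_one_div_lt (show (0:ℝ) < -x by linarith)
    have := h n
    linarith
  · intro h n
    have : (0:ℝ) < 1/((n:ℝ)+1) := by positivity
    linarith

lemma iUnion_Ici_add (x : ℝ) : ⋃ n : ℕ, Ici (x + 1/((n:ℝ)+1)) = Ioi x := by
  ext z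
  simp only [mem_iUnion, mem_Ici, mem_Ioi]
  constructor
  · rintro ⟨n, hn⟩
    have : (0:ℝ) < 1/((n:ℝ)+1) := by positivity
    linarith
  · intro hz
    obtain ⟨n, hn⟩ := exists_nat_one_div_lt (show (0:ℝ) < z - x by linarith)
    exact ⟨n, by linarith⟩

lemma tendsto_measure_Ici_add (ν : Measure ℝ) (x : ℝ) :
    Tendsto (fun n : ℕ => ν (Ici (x + 1/((n:ℝ)+1)))) atTop (nhds (ν (Ioi x))) := by
  have hmono : Monotone (fun n : ℕ => Ici (x + 1/((n:ℝ)+1))) := by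
    intro n m hnm
    apply Ici_subset_Ici.2
    have h0 : (n:ℝ) ≤ (m:ℝ) := Nat.cast_le.mpr hnm
    have h1 : ((n:ℝ)+1) ≤ ((m:ℝ)+1) := by linarith
    have := one_div_le_one_div_of_le (by positivity : (0:ℝ) < (n:ℝ)+1) h1
    linarith
  have := tendsto_measure_iUnion_atTop (μ := ν) hmono
  rwa [iUnion_Ici_add] at this

lemma tendsto_measure_Ici_neg (ν : Measure ℝ) [IsFiniteMeasure ν] :
    Tendsto (fun n : ℕ => ν (Ici (-(1/((n:ℝ)+1))))) atTop (nhds (ν (Ici 0))) := by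
  have hanti : Antitone (fun n : ℕ => Ici (-(1/((n:ℝ)+1)))) := by
    intro n m hnm
    apply Ici_subset_Ici.2
    have h0 : (n:ℝ) ≤ (m:ℝ) := Nat.cast_le.mpr hnm
    have h1 : ((n:ℝ)+1) ≤ ((m:ℝ)+1) := by linarith
    have := one_div_le_one_div_of_le (by positivity : (0:ℝ) < (n:ℝ)+1) h1
    linarith
  have := tendsto_measure_iInter_atTop (μ := ν)
    (fun n => measurableSet_Ici.nullMeasurableSet) hanti ⟨0, measure_ne_top _ _⟩
  rwa [iInter_Ici_neg] at this

section Gsection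

variable (μ : Measure ℝ)

/-- positive-part size-biased measure -/
def nup : Measure ℝ := μ.withDensity (fun z => ENNReal.ofReal z)

/-- negative-part size-biased measure -/
def nun : Measure ℝ := μ.withDensity (fun z => ENNReal.ofReal (-z))

lemma nup_apply (hint : Integrable (id : ℝ → ℝ) μ) {s : Set ℝ} (hs : MeasurableSet s) :
    nup μ s = ENNReal.ofReal (∫ z in s, max z 0 ∂μ) := by
  have hposint : Integrable (fun z : ℝ => max z 0) μ :=
    hint.pos_part.congr (Eventually.of_forall fun a => rfl)
  rw [nup, withDensity_apply _ hs]
  rw [ofReal_integral_eq_lintegral_ofReal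
    (hposint.integrableOn)
    (Eventually.of_forall fun z => le_max_right z 0)]
  refine lintegral_congr fun z => ?_
  rcases le_total z 0 with h | h
  · rw [max_eq_right h, ENNReal.ofReal_eq_zero.2 h]; simp
  · rw [max_eq_left h]

lemma nun_apply (hint : Integrable (id : ℝ → ℝ) μ) {s : Set ℝ} (hs : MeasurableSet s) :
    nun μ s = ENNReal.ofReal (∫ z in s, max (-z) 0 ∂μ) := by
  have hnegint : Integrable (fun z : ℝ => max (-z) 0) μ :=
    hint.neg.pos_part.congr (Eventually.of_forall fun a => rfl)
  rw [nun, withDensity_apply _ hs]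
  rw [ofReal_integral_eq_lintegral_ofReal
    (hnegint.integrableOn)
    (Eventually.of_forall fun z => le_max_right (-z) 0)]
  refine lintegral_congr fun z => ?_
  rcases le_total (-z) 0 with h | h
  · rw [max_eq_right h, ENNReal.ofReal_eq_zero.2 h]; simp
  · rw [max_eq_left h]

lemma nup_fin (hint : Integrable (id : ℝ → ℝ) μ) : IsFiniteMeasure (nup μ) := by
  constructor
  rw [nup_apply μ hint MeasurableSet.univ]
  exact ENNReal.ofReal_lt_top

lemma nun_fin (hint : Integrable (id : ℝ → ℝ) μ) : IsFiniteMeasure (nun μ) := by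
  constructor
  rw [nun_apply μ hint MeasurableSet.univ]
  exact ENNReal.ofReal_lt_top

lemma nup_Iic_zero : nup μ (Iic 0) = 0 := by
  rw [nup, withDensity_apply _ measurableSet_Iic]
  rw [setLIntegral_congr_fun measurableSet_Iic
    (fun z (hz : z ≤ 0) => ENNReal.ofReal_eq_zero.2 hz)]
  simp

lemma nun_Ici_zero : nun μ (Ici 0) = 0 := by
  rw [nun, withDensity_apply _ measurableSet_Ici]
  rw [setLIntegral_congr_fun measurableSet_Ici
    (fun z (hz : (0:ℝ) ≤ z) => ENNReal.ofReal_eq_zero.2 (by linarith))]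
  simp

lemma G_nonneg_eq (hint : Integrable (id : ℝ → ℝ) μ) {x : ℝ} (hx : 0 ≤ x) :
    G μ x = ((nup μ) (Iic x)).toReal := by
  rw [nup_apply μ hint measurableSet_Iic]
  have h2 : ∫ z in Iic x, max z 0 ∂μ = ∫ z in Ioc 0 x, z ∂μ := by
    have hposint : Integrable (fun z : ℝ => max z 0) μ :=
      hint.pos_part.congr (Eventually.of_forall fun a => rfl)
    rw [← Iic_union_Ioc_eq_Iic hx,
      setIntegral_union (Iic_disjoint_Ioc le_rfl) measurableSet_Ioc
        hposint.integrableOn hposint.integrableOn]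
    have h3 : ∫ z in Iic (0:ℝ), max z 0 ∂μ = 0 := by
      rw [setIntegral_congr_fun measurableSet_Iic
        (fun z (hz : z ≤ 0) => max_eq_right hz)]
      simp
    have h4 : ∫ z in Ioc (0:ℝ) x, max z 0 ∂μ = ∫ z in Ioc (0:ℝ) x, z ∂μ :=
      setIntegral_congr_fun measurableSet_Ioc (fun z hz => max_eq_left hz.1.le)
    rw [h3, h4, zero_add]
  rw [h2, ENNReal.toReal_ofReal
    (setIntegral_nonneg measurableSet_Ioc fun z hz => hz.1.le)]
  rw [G, if_pos hx]

lemma G_neg_eq (hint : Integrable (id : ℝ → ℝ) μ) {x : ℝ} (hx : x < 0) :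
    G μ x = ((nun μ) (Ici x)).toReal := by
  rw [nun_apply μ hint measurableSet_Ici]
  have h2 : ∫ z in Ici x, max (-z) 0 ∂μ = ∫ z in Ico x 0, -z ∂μ := by
    have hnegint : Integrable (fun z : ℝ => max (-z) 0) μ :=
      hint.neg.pos_part.congr (Eventually.of_forall fun a => rfl)
    have hdisj : Disjoint (Ico x (0:ℝ)) (Ici (0:ℝ)) :=
      disjoint_left.mpr fun a ha hb => absurd hb (not_le.2 ha.2)
    rw [← Ico_union_Ici_eq_Ici hx.le,
      setIntegral_union hdisj measurableSet_Ici hnegint.integrableOn hnegint.integrableOn]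
    have h3 : ∫ z in Ici (0:ℝ), max (-z) 0 ∂μ = 0 := by
      rw [setIntegral_congr_fun measurableSet_Ici
        (fun z (hz : (0:ℝ) ≤ z) => max_eq_right (by linarith))]
      simp
    have h4 : ∫ z in Ico x (0:ℝ), max (-z) 0 ∂μ = ∫ z in Ico x (0:ℝ), -z ∂μ :=
      setIntegral_congr_fun measurableSet_Ico (fun z hz => max_eq_left (by linarith [hz.2]))
    rw [h3, h4, add_zero]
  rw [h2, ENNReal.toReal_ofReal
    (setIntegral_nonneg measurableSet_Ico fun z hz => by linarith [hz.2])]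
  rw [G, if_neg (not_le.2 hx)]

lemma leftLim_G_eq (hint : Integrable (id : ℝ → ℝ) μ) {x : ℝ} (hx : 0 ≤ x) :
    Function.leftLim (G μ) x = ((nup μ) (Iio x)).toReal := by
  haveI := nup_fin μ hint
  haveI := nun_fin μ hint
  rcases eq_or_lt_of_le hx with h0 | h0
  · -- x = 0
    rw [← h0]
    have hIio0 : (nup μ) (Iio (0:ℝ)) = 0 :=
      measure_mono_null Iio_subset_Iic_self (nup_Iic_zero μ)
    rw [hIio0, ENNReal.toReal_zero]
    set F : ℝ → ℝ := fun y => ((nun μ) (Ici y)).toReal with hF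
    have hFanti : Antitone F := fun a b hab =>
      ENNReal.toReal_mono (measure_ne_top _ _) (measure_mono (Ici_subset_Ici.2 hab))
    have htends := hFanti.tendsto_nhdsLT (0:ℝ)
    have hinf : sInf (F '' Iio (0:ℝ)) = 0 := by
      refine le_antisymm ?_ (le_csInf (Nonempty.image _ nonempty_Iio) ?_)
      · have htd : Tendsto (fun n : ℕ => ((nun μ) (Ici (-(1/((n:ℝ)+1))))).toReal)
            atTop (nhds (((nun μ) (Ici (0:ℝ))).toReal)) :=
          (ENNReal.tendsto_toReal (measure_ne_top _ _)).comp (tendsto_measure_Ici_neg (nun μ))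
        rw [nun_Ici_zero μ, ENNReal.toReal_zero] at htd
        refine ge_of_tendsto htd (Eventually.of_forall fun n => ?_)
        refine csInf_le ⟨0, ?_⟩ ⟨-(1/((n:ℝ)+1)), ?_, rfl⟩
        · rintro b ⟨y, hy, rfl⟩
          exact ENNReal.toReal_nonneg
        · have : (0:ℝ) < 1/((n:ℝ)+1) := by positivity
          simp only [mem_Iio]; linarith
      · rintro b ⟨y, hy, rfl⟩
        exact ENNReal.toReal_nonneg
    rw [hinf] at htends
    have hev : (fun y => F y) =ᶠ[nhdsWithin (0:ℝ) (Iio 0)] (G μ) := by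
      refine eventually_of_mem self_mem_nhdsWithin ?_
      intro y hy
      exact (G_neg_eq μ hint hy).symm
    exact leftLim_eq_of_tendsto
      (htends.congr' hev)
  · -- 0 < x
    set F : ℝ → ℝ := fun y => ((nup μ) (Iic y)).toReal with hF
    have hFmono : Monotone F := fun a b hab =>
      ENNReal.toReal_mono (measure_ne_top _ _) (measure_mono (Iic_subset_Iic.2 hab))
    have htends := hFmono.tendsto_nhdsLT x
    have hbdd : BddAbove (F '' Iio x) := by
      refine ⟨((nup μ) (Iio x)).toReal, ?_⟩
      rintro b ⟨y, hy, rfl⟩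
      exact ENNReal.toReal_mono (measure_ne_top _ _)
        (measure_mono (fun a (ha : a ≤ y) => lt_of_le_of_lt ha hy))
    have hsup : sSup (F '' Iio x) = ((nup μ) (Iio x)).toReal := by
      refine le_antisymm (csSup_le (Nonempty.image _ nonempty_Iio) ?_) ?_
      · rintro b ⟨y, hy, rfl⟩
        exact ENNReal.toReal_mono (measure_ne_top _ _)
          (measure_mono (fun a (ha : a ≤ y) => lt_of_le_of_lt ha hy))
      · have htd : Tendsto (fun n : ℕ => ((nup μ) (Iic (x - 1/((n:ℝ)+1)))).toReal)
            atTop (nhds (((nup μ) (Iio x)).toReal)) :=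
          (ENNReal.tendsto_toReal (measure_ne_top _ _)).comp (tendsto_measure_Iic_sub (nup μ) x)
        refine le_of_tendsto htd (Eventually.of_forall fun n => ?_)
        refine le_csSup hbdd ⟨x - 1/((n:ℝ)+1), ?_, rfl⟩
        have : (0:ℝ) < 1/((n:ℝ)+1) := by positivity
        simp only [mem_Iio]; linarith
    rw [hsup] at htends
    have hev : (fun y => F y) =ᶠ[nhdsWithin x (Iio x)] (G μ) := by
      refine eventually_of_mem (Ioo_mem_nhdsLT_of_mem (⟨h0, le_rfl⟩ : x ∈ Ioc 0 x)) ?_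
      intro y hy
      exact (G_nonneg_eq μ hint hy.1.le).symm
    exact leftLim_eq_of_tendsto
      (htends.congr' hev)

lemma rightLim_G_eq (hint : Integrable (id : ℝ → ℝ) μ) {x : ℝ} (hx : x < 0) :
    Function.rightLim (G μ) x = ((nun μ) (Ioi x)).toReal := by
  haveI := nun_fin μ hint
  set F : ℝ → ℝ := fun y => ((nun μ) (Ici y)).toReal with hF
  have hFanti : Antitone F := fun a b hab =>
    ENNReal.toReal_mono (measure_ne_top _ _) (measure_mono (Ici_subset_Ici.2 hab))
  have htends := hFanti.tendsto_nhdsGT x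
  have hbdd : BddAbove (F '' Ioi x) := by
    refine ⟨((nun μ) (Ioi x)).toReal, ?_⟩
    rintro b ⟨y, hy, rfl⟩
    exact ENNReal.toReal_mono (measure_ne_top _ _)
      (measure_mono (fun a (ha : y ≤ a) => lt_of_lt_of_le hy ha))
  have hsup : sSup (F '' Ioi x) = ((nun μ) (Ioi x)).toReal := by
    refine le_antisymm (csSup_le (Nonempty.image _ nonempty_Ioi) ?_) ?_
    · rintro b ⟨y, hy, rfl⟩
      exact ENNReal.toReal_mono (measure_ne_top _ _)
        (measure_mono (fun a (ha : y ≤ a) => lt_of_lt_of_le hy ha))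
    · have htd : Tendsto (fun n : ℕ => ((nun μ) (Ici (x + 1/((n:ℝ)+1)))).toReal)
          atTop (nhds (((nun μ) (Ioi x)).toReal)) :=
        (ENNReal.tendsto_toReal (measure_ne_top _ _)).comp (tendsto_measure_Ici_add (nun μ) x)
      refine le_of_tendsto htd (Eventually.of_forall fun n => ?_)
      refine le_csSup hbdd ⟨x + 1/((n:ℝ)+1), ?_, rfl⟩
      have : (0:ℝ) < 1/((n:ℝ)+1) := by positivity
      simp only [mem_Ioi]; linarith
  rw [hsup] at htends
  have hev : (fun y => F y) =ᶠ[nhdsWithin x (Ioi x)] (G μ) := by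
    refine eventually_of_mem (Ioo_mem_nhdsGT_of_mem (⟨le_rfl, hx⟩ : x ∈ Ico x 0)) ?_
    intro y hy
    exact (G_neg_eq μ hint hy.2).symm
  exact rightLim_eq_of_tendsto
    (htends.congr' hev)

end Gsection
section Main

variable (μ : Measure ℝ)

lemma nup_split (x : ℝ) : (nup μ) (Iic x) = (nup μ) (Iio x) + (nup μ) {x} := by
  rw [← Iio_union_right, measure_union (by simp) (measurableSet_singleton x)]

lemma nun_split (x : ℝ) : (nun μ) (Ici x) = (nun μ) (Ioi x) + (nun μ) {x} := by
  rw [← Ioi_union_left, measure_union (by simp) (measurableSet_singleton x)]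

lemma Gtilde_eq (hint : Integrable (id : ℝ → ℝ) μ) (x u : ℝ) :
    Gtilde μ x u = if 0 ≤ x
      then ((nup μ) (Iio x)).toReal + ((nup μ) {x}).toReal * u
      else ((nun μ) (Ioi x)).toReal + ((nun μ) {x}).toReal * u := by
  haveI := nup_fin μ hint
  haveI := nun_fin μ hint
  by_cases hx : 0 ≤ x
  · rw [if_pos hx, Gtilde, if_pos hx, leftLim_G_eq μ hint hx, G_nonneg_eq μ hint hx,
      nup_split μ x, ENNReal.toReal_add (measure_ne_top _ _) (measure_ne_top _ _)]
    ring
  · push_neg at hx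
    rw [if_neg (not_le.2 hx), Gtilde, if_neg (not_le.2 hx), rightLim_G_eq μ hint hx,
      G_neg_eq μ hint hx, nun_split μ x,
      ENNReal.toReal_add (measure_ne_top _ _) (measure_ne_top _ _)]
    ring

lemma meas_cdf_parts (ν : Measure ℝ) [IsFiniteMeasure ν] :
    Measurable (fun y : ℝ => ν (Iio y)) ∧ Measurable (fun y : ℝ => ν (Iic y)) ∧
      Measurable (fun y : ℝ => ν {y}) ∧ Measurable (fun y : ℝ => ν (Ioi y)) ∧
      Measurable (fun y : ℝ => ν (Ici y)) := by
  have h1 : Measurable fun y : ℝ => ν (Iio y) :=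
    Monotone.measurable (fun a b hab => measure_mono (Iio_subset_Iio hab))
  have h2 : Measurable fun y : ℝ => ν (Iic y) :=
    Monotone.measurable (fun a b hab => measure_mono (Iic_subset_Iic.2 hab))
  have h3 : Measurable fun y : ℝ => ν {y} := by
    have he : (fun y : ℝ => ν {y}) = fun y => ν (Iic y) - ν (Iio y) := by
      funext y
      have hs : ν (Iic y) = ν (Iio y) + ν {y} := by
        rw [← Iio_union_right, measure_union (by simp) (measurableSet_singleton y)]
      rw [hs, ENNReal.add_sub_cancel_left (measure_ne_top _ _)]
    rw [he]
    exact h2.sub h1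
  have h4 : Measurable fun y : ℝ => ν (Ioi y) :=
    Antitone.measurable (fun a b hab => measure_mono (Ioi_subset_Ioi hab))
  have h5 : Measurable fun y : ℝ => ν (Ici y) :=
    Antitone.measurable (fun a b hab => measure_mono (Ici_subset_Ici.2 hab))
  exact ⟨h1, h2, h3, h4, h5⟩

lemma meas_inner (ν : Measure ℝ) [IsFiniteMeasure ν] (t : ℝ) :
    Measurable (fun y : ℝ => volume.restrict (Icc (0:ℝ) 1)
      {u : ℝ | (ν (Iio y)).toReal + (ν {y}).toReal * u ≤ t}) := by
  obtain ⟨h1, h2, h3, h4, h5⟩ := meas_cdf_parts ν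
  have heq : (fun y : ℝ => volume.restrict (Icc (0:ℝ) 1)
      {u : ℝ | (ν (Iio y)).toReal + (ν {y}).toReal * u ≤ t}) =
      fun y => if (ν {y}).toReal = 0 then (if (ν (Iio y)).toReal ≤ t then 1 else 0)
        else ENNReal.ofReal (min ((t - (ν (Iio y)).toReal) / (ν {y}).toReal) 1) :=
    funext fun y => inner_eq _ _ t ENNReal.toReal_nonneg
  rw [heq]
  have hset1 : MeasurableSet {y : ℝ | (ν {y}).toReal = 0} :=
    h3.ennreal_toReal (measurableSet_singleton 0)
  have hset2 : MeasurableSet {y : ℝ | (ν (Iio y)).toReal ≤ t} :=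
    measurableSet_le h1.ennreal_toReal measurable_const
  refine Measurable.ite hset1 (Measurable.ite hset2 measurable_const measurable_const) ?_
  exact ENNReal.measurable_ofReal.comp
    ((((measurable_const.sub h1.ennreal_toReal).div h3.ennreal_toReal)).min measurable_const)

lemma measurable_GtildePair (hint : Integrable (id : ℝ → ℝ) μ) :
    Measurable (fun p : ℝ × ℝ => Gtilde μ p.1 p.2) := by
  haveI := nup_fin μ hint
  haveI := nun_fin μ hint
  obtain ⟨p1, p2, p3, p4, p5⟩ := meas_cdf_parts (nup μ)
  obtain ⟨n1, n2, n3, n4, n5⟩ := meas_cdf_parts (nun μ)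
  have heq : (fun p : ℝ × ℝ => Gtilde μ p.1 p.2) = fun p =>
      if 0 ≤ p.1 then ((nup μ) (Iio p.1)).toReal + ((nup μ) {p.1}).toReal * p.2
      else ((nun μ) (Ioi p.1)).toReal + ((nun μ) {p.1}).toReal * p.2 :=
    funext fun p => Gtilde_eq μ hint p.1 p.2
  rw [heq]
  have hset : MeasurableSet {p : ℝ × ℝ | 0 ≤ p.1} :=
    measurableSet_le measurable_const measurable_fst
  refine Measurable.ite hset ?_ ?_
  · exact ((p1.comp measurable_fst).ennreal_toReal).add
      (((p3.comp measurable_fst).ennreal_toReal).mul measurable_snd)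
  · exact ((n4.comp measurable_fst).ennreal_toReal).add
      (((n3.comp measurable_fst).ennreal_toReal).mul measurable_snd)

lemma int_maxpos (hint : Integrable (id : ℝ → ℝ) μ) (hmean : ∫ x, x ∂μ = 0) :
    ∫ z, max z 0 ∂μ = (1/2) * ∫ z, |z| ∂μ := by
  have habsint : Integrable (fun z : ℝ => |z|) μ :=
    hint.abs.congr (Eventually.of_forall fun a => rfl)
  have hidint : Integrable (fun z : ℝ => z) μ := hint
  have h1 : (fun z : ℝ => max z 0) = fun z => (z + |z|)/2 := by
    funext z
    rcases le_total 0 z with h | h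
    · rw [max_eq_left h, abs_of_nonneg h]; ring
    · rw [max_eq_right h, abs_of_nonpos h]; ring
  rw [h1]
  rw [integral_div]
  rw [integral_add hidint habsint, hmean]
  ring

lemma int_maxneg (hint : Integrable (id : ℝ → ℝ) μ) (hmean : ∫ x, x ∂μ = 0) :
    ∫ z, max (-z) 0 ∂μ = (1/2) * ∫ z, |z| ∂μ := by
  have habsint : Integrable (fun z : ℝ => |z|) μ :=
    hint.abs.congr (Eventually.of_forall fun a => rfl)
  have hidint : Integrable (fun z : ℝ => z) μ := hint
  have h1 : (fun z : ℝ => max (-z) 0) = fun z => (|z| - z)/2 := by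
    funext z
    rcases le_total 0 z with h | h
    · rw [max_eq_right (by linarith), abs_of_nonneg h]; ring
    · rw [max_eq_left (by linarith), abs_of_nonpos h]; ring
  rw [h1]
  rw [integral_div]
  rw [integral_sub habsint hidint, hmean]
  ring

lemma nup_mass (hint : Integrable (id : ℝ → ℝ) μ) (hmean : ∫ x, x ∂μ = 0) :
    nup μ univ = ENNReal.ofReal ((1/2) * ∫ z, |z| ∂μ) := by
  rw [nup_apply μ hint MeasurableSet.univ, Measure.restrict_univ, int_maxpos μ hint hmean]

lemma nun_mass (hint : Integrable (id : ℝ → ℝ) μ) (hmean : ∫ x, x ∂μ = 0) :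
    nun μ univ = ENNReal.ofReal ((1/2) * ∫ z, |z| ∂μ) := by
  rw [nun_apply μ hint MeasurableSet.univ, Measure.restrict_univ, int_maxneg μ hint hmean]

lemma density_split :
    μ.withDensity (fun x => ENNReal.ofReal |x|) = nup μ + nun μ := by
  have hfg : (fun x : ℝ => ENNReal.ofReal |x|) =
      (fun z : ℝ => ENNReal.ofReal z) + (fun z : ℝ => ENNReal.ofReal (-z)) := by
    funext z
    simp only [Pi.add_apply]
    rcases le_total 0 z with h | h
    · rw [abs_of_nonneg h, ENNReal.ofReal_eq_zero.2 (by linarith : -z ≤ 0), add_zero]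
    · rw [abs_of_nonpos h, ENNReal.ofReal_eq_zero.2 h, zero_add]
  have hmg : Measurable (fun z : ℝ => ENNReal.ofReal (-z)) :=
    ENNReal.measurable_ofReal.comp measurable_neg
  rw [nup, nun, hfg, withDensity_add_right _ hmg]

end Main

/-- If `Y` has the size-biased (by `|x|`) distribution of a zero-mean `μ` and `U` is an
independent uniform variable on `[0,1]`, then `P(Y = 0) = 0` and `G̃(Y,U)` is uniformly
distributed on `[0, m]`, where `m = (1/2)·E|X|`. -/
theorem Gtilde_sizebiased_uniform
    {Ω : Type*} [MeasurableSpace Ω] (P : Measure Ω) [IsProbabilityMeasure P]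
    (μ : Measure ℝ) [IsProbabilityMeasure μ]
    (hint : Integrable (id : ℝ → ℝ) μ) (hmean : ∫ x, x ∂μ = 0)
    (habs : 0 < ∫ x, |x| ∂μ)
    (Y U : Ω → ℝ) (hY : Measurable Y) (hU : Measurable U)
    (hindep : IndepFun Y U P)
    (hUunif : Measure.map U P = volume.restrict (Set.Icc (0:ℝ) 1))
    (hYdist : Measure.map Y P
      = (ENNReal.ofReal (∫ x, |x| ∂μ))⁻¹ • μ.withDensity (fun x => ENNReal.ofReal |x|)) :
    P {ω | Y ω = 0} = 0 ∧
    Measure.map (fun ω => Gtilde μ (Y ω) (U ω)) P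
      = (ENNReal.ofReal ((1/2) * ∫ x, |x| ∂μ))⁻¹
          • volume.restrict (Set.Icc (0:ℝ) ((1/2) * ∫ x, |x| ∂μ)) := by
  haveI := nup_fin μ hint
  haveI := nun_fin μ hint
  have hGm : Measurable (fun p : ℝ × ℝ => Gtilde μ p.1 p.2) := measurable_GtildePair μ hint
  constructor
  · have h1 : {ω | Y ω = 0} = Y ⁻¹' {0} := rfl
    rw [h1, ← Measure.map_apply hY (measurableSet_singleton 0), hYdist]
    have h2 : μ.withDensity (fun x => ENNReal.ofReal |x|) {0} = 0 := by
      rw [withDensity_apply _ (measurableSet_singleton 0)]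
      have hzero : ∫⁻ a in ({0}:Set ℝ), ENNReal.ofReal |a| ∂μ
          = ∫⁻ _ in ({0}:Set ℝ), (0:ENNReal) ∂μ :=
        setLIntegral_congr_fun (measurableSet_singleton 0)
          (fun z hz => by
            rw [mem_singleton_iff] at hz
            subst hz
            simp)
      rw [hzero, lintegral_zero]
    simp [Measure.smul_apply, h2]
  · set m : ℝ := (1/2) * ∫ x, |x| ∂μ with hm
    have hmassp : nup μ univ = ENNReal.ofReal m := nup_mass μ hint hmean
    have hmassn : nun μ univ = ENNReal.ofReal m := nun_mass μ hint hmean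
    have hpairm : Measurable fun ω => (Y ω, U ω) := hY.prodMk hU
    have hpair : Measure.map (fun ω => (Y ω, U ω)) P
        = (Measure.map Y P).prod (Measure.map U P) :=
      (ProbabilityTheory.indepFun_iff_map_prod_eq_prod_map_map
        hY.aemeasurable hU.aemeasurable).1 hindep
    have hmapeq : Measure.map (fun ω => Gtilde μ (Y ω) (U ω)) P
        = Measure.map (fun p : ℝ × ℝ => Gtilde μ p.1 p.2)
            (((ENNReal.ofReal (∫ x, |x| ∂μ))⁻¹ •
                μ.withDensity (fun x => ENNReal.ofReal |x|)).prod
              (volume.restrict (Icc (0:ℝ) 1))) := by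
      rw [← hYdist, ← hUunif, ← hpair, Measure.map_map hGm hpairm]
      rfl
    haveI : IsProbabilityMeasure (Measure.map (fun ω => Gtilde μ (Y ω) (U ω)) P) :=
      Measure.isProbabilityMeasure_map ((hGm.comp hpairm).aemeasurable)
    refine Measure.ext_of_Iic _ _ (fun t => ?_)
    rw [hmapeq]
    rw [Measure.map_apply hGm measurableSet_Iic]
    rw [Measure.prod_apply (hGm measurableSet_Iic)]
    rw [lintegral_smul_measure, density_split μ, lintegral_add_measure]
    have hpos : ∫⁻ y, (volume.restrict (Icc (0:ℝ) 1))
        (Prod.mk y ⁻¹' ((fun p : ℝ × ℝ => Gtilde μ p.1 p.2) ⁻¹' Iic t)) ∂(nup μ)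
        = min (ENNReal.ofReal t) (ENNReal.ofReal m) := by
      have hnull : (nup μ) {y : ℝ | ¬ 0 ≤ y} = 0 := by
        have hss : {y : ℝ | ¬ 0 ≤ y} ⊆ Iic 0 := fun y hy => le_of_lt (not_le.1 hy)
        exact measure_mono_null hss (nup_Iic_zero μ)
      have hae : (fun y => (volume.restrict (Icc (0:ℝ) 1))
            (Prod.mk y ⁻¹' ((fun p : ℝ × ℝ => Gtilde μ p.1 p.2) ⁻¹' Iic t)))
          =ᵐ[nup μ] (fun y => (volume.restrict (Icc (0:ℝ) 1))
            {u : ℝ | ((nup μ) (Iio y)).toReal + ((nup μ) {y}).toReal * u ≤ t}) := by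
        rw [Filter.EventuallyEq, ae_iff]
        refine measure_mono_null (fun y hy => ?_) hnull
        simp only [mem_setOf_eq] at hy ⊢
        intro h0y
        apply hy
        congr 1
        ext u
        simp only [mem_preimage, mem_Iic, mem_setOf_eq, Gtilde_eq μ hint, if_pos h0y]
      rw [lintegral_congr_ae hae, core_lintegral (nup μ) t, hmassp]
    have hneg : ∫⁻ y, (volume.restrict (Icc (0:ℝ) 1))
        (Prod.mk y ⁻¹' ((fun p : ℝ × ℝ => Gtilde μ p.1 p.2) ⁻¹' Iic t)) ∂(nun μ)
        = min (ENNReal.ofReal t) (ENNReal.ofReal m) := by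
      set η : Measure ℝ := Measure.map (fun z : ℝ => -z) (nun μ) with hη
      haveI : IsFiniteMeasure η := by
        constructor
        rw [hη, Measure.map_apply measurable_neg MeasurableSet.univ]
        simpa using measure_lt_top (nun μ) _
      have hη_apply : ∀ s : Set ℝ, MeasurableSet s → η s = nun μ ((fun z : ℝ => -z) ⁻¹' s) :=
        fun s hs => Measure.map_apply measurable_neg hs
      have hηIio : ∀ y : ℝ, η (Iio (-y)) = nun μ (Ioi y) := by
        intro y
        rw [hη_apply _ measurableSet_Iio]
        congr 1
        ext z
        simp only [mem_preimage, mem_Iio, mem_Ioi]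
        constructor <;> intro <;> linarith
      have hηsing : ∀ y : ℝ, η {(-y)} = nun μ {y} := by
        intro y
        rw [hη_apply _ (measurableSet_singleton _)]
        congr 1
        ext z
        simp only [mem_preimage, mem_singleton_iff]
        constructor <;> intro h <;> linarith
      have hη_univ : η univ = ENNReal.ofReal m := by
        rw [hη_apply _ MeasurableSet.univ]
        simpa using hmassn
      have hnull : (nun μ) {y : ℝ | ¬ y < 0} = 0 := by
        have hss : {y : ℝ | ¬ y < 0} ⊆ Ici 0 := fun y hy => not_lt.1 hy
        exact measure_mono_null hss (nun_Ici_zero μ)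
      have hae : (fun y => (volume.restrict (Icc (0:ℝ) 1))
            (Prod.mk y ⁻¹' ((fun p : ℝ × ℝ => Gtilde μ p.1 p.2) ⁻¹' Iic t)))
          =ᵐ[nun μ] (fun y => (volume.restrict (Icc (0:ℝ) 1))
            {u : ℝ | ((nun μ) (Ioi y)).toReal + ((nun μ) {y}).toReal * u ≤ t}) := by
        rw [Filter.EventuallyEq, ae_iff]
        refine measure_mono_null (fun y hy => ?_) hnull
        simp only [mem_setOf_eq] at hy ⊢
        intro hylt
        apply hy
        congr 1
        ext u
        simp only [mem_preimage, mem_Iic, mem_setOf_eq, Gtilde_eq μ hint,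
          if_neg (not_le.2 hylt)]
      rw [lintegral_congr_ae hae]
      have hswap : ∀ y : ℝ, (volume.restrict (Icc (0:ℝ) 1))
          {u : ℝ | ((nun μ) (Ioi y)).toReal + ((nun μ) {y}).toReal * u ≤ t}
          = (fun s : ℝ => (volume.restrict (Icc (0:ℝ) 1))
              {u : ℝ | (η (Iio s)).toReal + (η {s}).toReal * u ≤ t}) (-y) := by
        intro y
        simp only
        rw [hηIio y, hηsing y]
      rw [lintegral_congr hswap, ← lintegral_map (meas_inner η t) measurable_neg]
      rw [core_lintegral η t, hη_univ]
    rw [hpos, hneg]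
    rw [Measure.smul_apply, Measure.restrict_apply measurableSet_Iic]
    have hsetR : Iic t ∩ Icc 0 m = Icc 0 (min m t) := by
      ext x
      simp only [mem_inter_iff, mem_Iic, mem_Icc, le_min_iff]
      tauto
    rw [hsetR, Real.volume_Icc, sub_zero]
    have hTm : (∫ x, |x| ∂μ) = 2 * m := by rw [hm]; ring
    rw [hTm, smul_eq_mul]
    have hofr : ENNReal.ofReal (2 * m) = 2 * ENNReal.ofReal m := by
      rw [ENNReal.ofReal_mul (by norm_num : (0:ℝ) ≤ 2)]
      norm_num
    rw [hofr]
    have hmin : ENNReal.ofReal (min m t) = min (ENNReal.ofReal t) (ENNReal.ofReal m) := by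
      rcases le_total m t with h | h
      · rw [min_eq_left h, min_eq_right (ENNReal.ofReal_le_ofReal h)]
      · rw [min_eq_right h, min_eq_left (ENNReal.ofReal_le_ofReal h)]
    rw [hmin]
    rw [ENNReal.mul_inv (Or.inl (by norm_num)) (Or.inl (by norm_num))]
    rw [← two_mul]
    calc 2⁻¹ * (ENNReal.ofReal m)⁻¹ * (2 * min (ENNReal.ofReal t) (ENNReal.ofReal m))
        = (2⁻¹ * 2) * ((ENNReal.ofReal m)⁻¹ * min (ENNReal.ofReal t) (ENNReal.ofReal m)) := by
          ring
      _ = (ENNReal.ofReal m)⁻¹ * min (ENNReal.ofReal t) (ENNReal.ofReal m) := by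
          rw [ENNReal.inv_mul_cancel (by norm_num) (by norm_num), one_mul]
end
end

section
/- Let X be a zero-mean random variable and U uniform on [0,1] independent of X; let r(x,u) := x₋(G̃(x,u)) for x ≥ 0 and r(x,u) := x₊(G̃(x,u)) for x ≤ 0, where x₊ and x₋ are the positive and negative generalized inverses of G. Then almost surely |r(X,U)| < ∞. -/
open MeasureTheory ProbabilityTheory Set Function

noncomputable section

namespace RecipAux

open Filter Topology

variable {μ : Measure ℝ}

/-- Monotone positive part of `G`. -/
def Gp (μ : Measure ℝ) (x : ℝ) : ℝ := ∫ z in Set.Ioc (0:ℝ) x, z ∂μ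

/-- Antitone negative part of `G`. -/
def Gm (μ : Measure ℝ) (x : ℝ) : ℝ := ∫ z in Set.Ico x 0, -z ∂μ

lemma G_of_nonneg (μ : Measure ℝ) {x : ℝ} (hx : 0 ≤ x) : G μ x = Gp μ x := if_pos hx

lemma G_of_neg (μ : Measure ℝ) {x : ℝ} (hx : ¬ 0 ≤ x) : G μ x = Gm μ x := if_neg hx

lemma G_zero (μ : Measure ℝ) : G μ 0 = 0 := by
  simp [G, Set.Ioc_self]

lemma Gbar_coe (μ : Measure ℝ) (y : ℝ) : Gbar μ (y : EReal) = G μ y := by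
  simp [Gbar]

lemma Gp_mono (hi : Integrable (fun z : ℝ => z) μ) : Monotone (Gp μ) := by
  intro a b hab
  apply setIntegral_mono_set hi.integrableOn
  · exact (ae_restrict_iff' measurableSet_Ioc).2 (ae_of_all _ fun z hz => hz.1.le)
  · exact HasSubset.Subset.eventuallyLE (Set.Ioc_subset_Ioc_right hab)

lemma Gm_anti (hi : Integrable (fun z : ℝ => z) μ) : Antitone (Gm μ) := by
  intro a b hab
  apply setIntegral_mono_set hi.neg.integrableOn
  · refine (ae_restrict_iff' measurableSet_Ico).2 (ae_of_all _ fun z hz => ?_)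
    have := hz.2
    simp only [Pi.neg_apply, Pi.zero_apply]
    linarith
  · exact HasSubset.Subset.eventuallyLE (Set.Ico_subset_Ico_left hab)

lemma Gp_le (hi : Integrable (fun z : ℝ => z) μ) (x : ℝ) : Gp μ x ≤ mTot μ := by
  apply setIntegral_mono_set hi.integrableOn
  · exact (ae_restrict_iff' measurableSet_Ioi).2 (ae_of_all _ fun z hz => hz.le)
  · exact HasSubset.Subset.eventuallyLE Set.Ioc_subset_Ioi_self

lemma Gm_le (hi : Integrable (fun z : ℝ => z) μ) (x : ℝ) :
    Gm μ x ≤ ∫ z in Set.Iio (0:ℝ), -z ∂μ := by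
  apply setIntegral_mono_set hi.neg.integrableOn
  · refine (ae_restrict_iff' measurableSet_Iio).2 (ae_of_all _ fun z hz => ?_)
    simp only [Pi.neg_apply, Pi.zero_apply]
    have : z < 0 := hz
    linarith
  · exact HasSubset.Subset.eventuallyLE Set.Ico_subset_Iio_self

lemma intOoo_le (hi : Integrable (fun z : ℝ => z) μ) (x : ℝ) :
    ∫ z in Set.Ioo (0:ℝ) x, z ∂μ ≤ mTot μ := by
  apply setIntegral_mono_set hi.integrableOn
  · exact (ae_restrict_iff' measurableSet_Ioi).2 (ae_of_all _ fun z hz => hz.le)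
  · exact HasSubset.Subset.eventuallyLE Set.Ioo_subset_Ioi_self

lemma intOoo_le' (hi : Integrable (fun z : ℝ => z) μ) (x : ℝ) :
    ∫ z in Set.Ioo x (0:ℝ), -z ∂μ ≤ ∫ z in Set.Iio (0:ℝ), -z ∂μ := by
  apply setIntegral_mono_set hi.neg.integrableOn
  · refine (ae_restrict_iff' measurableSet_Iio).2 (ae_of_all _ fun z hz => ?_)
    simp only [Pi.neg_apply, Pi.zero_apply]
    have : z < 0 := hz
    linarith
  · exact HasSubset.Subset.eventuallyLE Set.Ioo_subset_Iio_self

/-- `G(-n-1) → ∫_{(-∞,0)} (-z)`. -/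
lemma tendsto_G_neg (hi : Integrable (fun z : ℝ => z) μ) :
    Tendsto (fun n : ℕ => G μ (-(n:ℝ) - 1)) atTop (𝓝 (∫ z in Set.Iio (0:ℝ), -z ∂μ)) := by
  have hsm : ∀ n : ℕ, MeasurableSet (Set.Ico (-(n:ℝ) - 1) 0) := fun n => measurableSet_Ico
  have hmono : Monotone fun n : ℕ => Set.Ico (-(n:ℝ) - 1) 0 := by
    intro a b hab
    have : (a:ℝ) ≤ b := Nat.cast_le.2 hab
    exact Set.Ico_subset_Ico_left (by linarith)
  have hun : (⋃ n : ℕ, Set.Ico (-(n:ℝ) - 1) 0) = Set.Iio 0 := by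
    ext z
    simp only [Set.mem_iUnion, Set.mem_Ico, Set.mem_Iio]
    constructor
    · rintro ⟨n, _, h2⟩; exact h2
    · intro hz
      obtain ⟨n, hn⟩ := exists_nat_ge (-z - 1)
      exact ⟨n, by linarith, hz⟩
  have h := tendsto_setIntegral_of_monotone hsm hmono (f := fun z => -z)
    (by rw [hun]; exact hi.neg.integrableOn)
  rw [hun] at h
  refine h.congr fun n => ?_
  rw [G_of_neg μ (by push_neg; have : (0:ℝ) ≤ n := Nat.cast_nonneg n; linarith)]
  rfl

/-- `G(n+1) → mTot`. -/
lemma tendsto_G_pos (hi : Integrable (fun z : ℝ => z) μ) :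
    Tendsto (fun n : ℕ => G μ ((n:ℝ) + 1)) atTop (𝓝 (mTot μ)) := by
  have hsm : ∀ n : ℕ, MeasurableSet (Set.Ioc (0:ℝ) ((n:ℝ) + 1)) := fun n => measurableSet_Ioc
  have hmono : Monotone fun n : ℕ => Set.Ioc (0:ℝ) ((n:ℝ) + 1) := by
    intro a b hab
    have : (a:ℝ) ≤ b := Nat.cast_le.2 hab
    exact Set.Ioc_subset_Ioc_right (by linarith)
  have hun : (⋃ n : ℕ, Set.Ioc (0:ℝ) ((n:ℝ) + 1)) = Set.Ioi 0 := by
    ext z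
    simp only [Set.mem_iUnion, Set.mem_Ioc, Set.mem_Ioi]
    constructor
    · rintro ⟨n, h1, _⟩; exact h1
    · intro hz
      obtain ⟨n, hn⟩ := exists_nat_ge z
      exact ⟨n, hz, by linarith⟩
  have h := tendsto_setIntegral_of_monotone hsm hmono (f := fun z => z)
    (by rw [hun]; exact hi.integrableOn)
  rw [hun] at h
  refine h.congr fun n => ?_
  rw [G_of_nonneg μ (by have : (0:ℝ) ≤ n := Nat.cast_nonneg n; linarith)]
  rfl

lemma seq_tendsto_Iio (x : ℝ) :
    Tendsto (fun n : ℕ => x - 1/((n:ℝ)+1)) atTop (𝓝[<] x) := by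
  apply tendsto_nhdsWithin_of_tendsto_nhds_of_eventually_within
  · have h := tendsto_one_div_add_atTop_nhds_zero_nat (𝕜 := ℝ)
    have h2 : Tendsto (fun n : ℕ => x - 1/((n:ℝ)+1)) atTop (𝓝 (x - 0)) :=
      tendsto_const_nhds.sub h
    simpa using h2
  · refine Eventually.of_forall fun n => ?_
    have : (0:ℝ) < 1/((n:ℝ)+1) := by positivity
    simp only [Set.mem_Iio]; linarith

lemma seq_tendsto_Ioi (x : ℝ) :
    Tendsto (fun n : ℕ => x + 1/((n:ℝ)+1)) atTop (𝓝[>] x) := by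
  apply tendsto_nhdsWithin_of_tendsto_nhds_of_eventually_within
  · have h := tendsto_one_div_add_atTop_nhds_zero_nat (𝕜 := ℝ)
    have h2 : Tendsto (fun n : ℕ => x + 1/((n:ℝ)+1)) atTop (𝓝 (x + 0)) :=
      tendsto_const_nhds.add h
    simpa using h2
  · refine Eventually.of_forall fun n => ?_
    have : (0:ℝ) < 1/((n:ℝ)+1) := by positivity
    simp only [Set.mem_Ioi]; linarith

lemma leftLim_G_pos (hi : Integrable (fun z : ℝ => z) μ) {x : ℝ} (hx : 0 < x) :
    Function.leftLim (G μ) x = ∫ z in Set.Ioo 0 x, z ∂μ := by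
  have hseq := seq_tendsto_Iio x
  have h1 : Tendsto (Gp μ) (𝓝[<] x) (𝓝 (Function.leftLim (Gp μ) x)) :=
    (Gp_mono hi).tendsto_leftLim x
  have h2 := h1.comp hseq
  have h3 : Tendsto (fun n : ℕ => Gp μ (x - 1/((n:ℝ)+1))) atTop
      (𝓝 (∫ z in Set.Ioo 0 x, z ∂μ)) := by
    have hsm : ∀ n : ℕ, MeasurableSet (Set.Ioc (0:ℝ) (x - 1/((n:ℝ)+1))) :=
      fun n => measurableSet_Ioc
    have hmono : Monotone fun n : ℕ => Set.Ioc (0:ℝ) (x - 1/((n:ℝ)+1)) := by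
      intro a b hab
      have hc : ((a:ℝ)+1) ≤ ((b:ℝ)+1) := by
        have : (a:ℝ) ≤ b := Nat.cast_le.2 hab
        linarith
      have h2 : (1:ℝ)/((b:ℝ)+1) ≤ 1/((a:ℝ)+1) :=
        one_div_le_one_div_of_le (by positivity) hc
      exact Set.Ioc_subset_Ioc_right (by linarith)
    have hun : (⋃ n : ℕ, Set.Ioc (0:ℝ) (x - 1/((n:ℝ)+1))) = Set.Ioo 0 x := by
      ext z
      simp only [Set.mem_iUnion, Set.mem_Ioc, Set.mem_Ioo]
      constructor
      · rintro ⟨n, h1, h2⟩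
        have : (0:ℝ) < 1/((n:ℝ)+1) := by positivity
        exact ⟨h1, by linarith⟩
      · rintro ⟨h1, h2⟩
        obtain ⟨n, hn⟩ := exists_nat_one_div_lt (sub_pos.2 h2)
        exact ⟨n, h1, by linarith⟩
    have h := tendsto_setIntegral_of_monotone hsm hmono (f := fun z => z)
      (by rw [hun]; exact hi.integrableOn)
    rw [hun] at h
    exact h
  have hL : Function.leftLim (Gp μ) x = ∫ z in Set.Ioo 0 x, z ∂μ :=
    tendsto_nhds_unique h2 h3
  have h4 : Tendsto (G μ) (𝓝[<] x) (𝓝 (∫ z in Set.Ioo 0 x, z ∂μ)) := by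
    refine Tendsto.congr' ?_ (hL ▸ h1)
    filter_upwards [Ioo_mem_nhdsLT_of_mem (Set.mem_Ioc.2 ⟨hx, le_refl x⟩)] with y hy
    exact (G_of_nonneg μ hy.1.le).symm
  exact leftLim_eq_of_tendsto h4

lemma rightLim_G_neg (hi : Integrable (fun z : ℝ => z) μ) {x : ℝ} (hx : x < 0) :
    Function.rightLim (G μ) x = ∫ z in Set.Ioo x 0, -z ∂μ := by
  have hseq := seq_tendsto_Ioi x
  have h1 : Tendsto (Gm μ) (𝓝[>] x) (𝓝 (Function.rightLim (Gm μ) x)) :=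
    (Gm_anti hi).tendsto_rightLim x
  have h2 := h1.comp hseq
  have h3 : Tendsto (fun n : ℕ => Gm μ (x + 1/((n:ℝ)+1))) atTop
      (𝓝 (∫ z in Set.Ioo x 0, -z ∂μ)) := by
    have hsm : ∀ n : ℕ, MeasurableSet (Set.Ico (x + 1/((n:ℝ)+1)) 0) :=
      fun n => measurableSet_Ico
    have hmono : Monotone fun n : ℕ => Set.Ico (x + 1/((n:ℝ)+1)) 0 := by
      intro a b hab
      have hc : ((a:ℝ)+1) ≤ ((b:ℝ)+1) := by
        have : (a:ℝ) ≤ b := Nat.cast_le.2 hab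
        linarith
      have h2 : (1:ℝ)/((b:ℝ)+1) ≤ 1/((a:ℝ)+1) :=
        one_div_le_one_div_of_le (by positivity) hc
      exact Set.Ico_subset_Ico_left (by linarith)
    have hun : (⋃ n : ℕ, Set.Ico (x + 1/((n:ℝ)+1)) 0) = Set.Ioo x 0 := by
      ext z
      simp only [Set.mem_iUnion, Set.mem_Ico, Set.mem_Ioo]
      constructor
      · rintro ⟨n, h1, h2⟩
        have : (0:ℝ) < 1/((n:ℝ)+1) := by positivity
        exact ⟨by linarith, h2⟩
      · rintro ⟨h1, h2⟩
        obtain ⟨n, hn⟩ := exists_nat_one_div_lt (sub_pos.2 h1)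
        exact ⟨n, by linarith, h2⟩
    have h := tendsto_setIntegral_of_monotone hsm hmono (f := fun z => -z)
      (by rw [hun]; exact hi.neg.integrableOn)
    rw [hun] at h
    exact h
  have hL : Function.rightLim (Gm μ) x = ∫ z in Set.Ioo x 0, -z ∂μ :=
    tendsto_nhds_unique h2 h3
  have h4 : Tendsto (G μ) (𝓝[>] x) (𝓝 (∫ z in Set.Ioo x 0, -z ∂μ)) := by
    refine Tendsto.congr' ?_ (hL ▸ h1)
    filter_upwards [Ioo_mem_nhdsGT_of_mem (Set.mem_Ico.2 ⟨le_refl x, hx⟩)] with y hy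
    exact (G_of_neg μ (not_le.2 hy.2)).symm
  exact rightLim_eq_of_tendsto h4

lemma leftLim_G_zero (hi : Integrable (fun z : ℝ => z) μ) :
    Function.leftLim (G μ) 0 = 0 := by
  set mm := ∫ z in Set.Iio (0:ℝ), -z ∂μ with hmm
  set F : ℝ → ℝ := fun y => ∫ z in Set.Iio (min y 0), -z ∂μ with hF
  have FM : Monotone F := by
    intro a b hab
    apply setIntegral_mono_set hi.neg.integrableOn
    · refine (ae_restrict_iff' measurableSet_Iio).2 (ae_of_all _ fun z hz => ?_)
      have h1 : z < min b 0 := hz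
      have h2 := min_le_right b (0:ℝ)
      simp only [Pi.neg_apply, Pi.zero_apply]
      linarith
    · exact HasSubset.Subset.eventuallyLE (Set.Iio_subset_Iio (min_le_min_right 0 hab))
  have h1 : Tendsto F (𝓝[<] (0:ℝ)) (𝓝 (Function.leftLim F 0)) := FM.tendsto_leftLim 0
  have hseq := seq_tendsto_Iio (0:ℝ)
  have h2 := h1.comp hseq
  have h3 : Tendsto (fun n : ℕ => F (0 - 1/((n:ℝ)+1))) atTop (𝓝 mm) := by
    have hsm : ∀ n : ℕ, MeasurableSet (Set.Iio (min (0 - 1/((n:ℝ)+1)) 0)) :=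
      fun n => measurableSet_Iio
    have hmono : Monotone fun n : ℕ => Set.Iio (min (0 - 1/((n:ℝ)+1)) 0) := by
      intro a b hab
      have hc : ((a:ℝ)+1) ≤ ((b:ℝ)+1) := by
        have : (a:ℝ) ≤ b := Nat.cast_le.2 hab
        linarith
      have h2 : (1:ℝ)/((b:ℝ)+1) ≤ 1/((a:ℝ)+1) :=
        one_div_le_one_div_of_le (by positivity) hc
      exact Set.Iio_subset_Iio (min_le_min_right 0 (by linarith))
    have hun : (⋃ n : ℕ, Set.Iio (min (0 - 1/((n:ℝ)+1)) 0)) = Set.Iio 0 := by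
      ext z
      simp only [Set.mem_iUnion, Set.mem_Iio, lt_min_iff]
      constructor
      · rintro ⟨n, _, h2⟩; exact h2
      · intro hz
        obtain ⟨n, hn⟩ := exists_nat_one_div_lt (show (0:ℝ) < -z by linarith)
        exact ⟨n, by linarith, hz⟩
    have h := tendsto_setIntegral_of_monotone hsm hmono (f := fun z => -z)
      (by rw [hun]; exact hi.neg.integrableOn)
    rw [hun] at h
    exact h
  have hL : Function.leftLim F 0 = mm := tendsto_nhds_unique h2 h3
  have hGy : ∀ y : ℝ, y < 0 → G μ y = mm - F y := by
    intro y hy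
    rw [G_of_neg μ (not_le.2 hy)]
    have hdisj : Disjoint (Set.Iio y) (Set.Ico y 0) := by
      rw [Set.disjoint_left]
      rintro z hz ⟨h1, _⟩
      exact absurd hz (not_lt.2 h1)
    have hsplit : ∫ z in Set.Iio y ∪ Set.Ico y 0, -z ∂μ
        = ∫ z in Set.Iio y, -z ∂μ + ∫ z in Set.Ico y 0, -z ∂μ :=
      setIntegral_union hdisj measurableSet_Ico hi.neg.integrableOn hi.neg.integrableOn
    have hU : Set.Iio y ∪ Set.Ico y 0 = Set.Iio 0 := by
      ext z
      simp only [Set.mem_union, Set.mem_Iio, Set.mem_Ico]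
      constructor
      · rintro (h | ⟨_, h⟩)
        · linarith
        · exact h
      · intro h
        rcases lt_or_ge z y with h' | h'
        · exact Or.inl h'
        · exact Or.inr ⟨h', h⟩
    rw [hU] at hsplit
    have hFy : F y = ∫ z in Set.Iio y, -z ∂μ := by
      simp only [hF, min_eq_left hy.le]
    rw [hFy]
    have hgm : Gm μ y = ∫ z in Set.Ico y 0, -z ∂μ := rfl
    rw [hgm]
    linarith
  have h4 : Tendsto (G μ) (𝓝[<] (0:ℝ)) (𝓝 (mm - mm)) := by
    refine Tendsto.congr' ?_ (tendsto_const_nhds.sub (hL ▸ h1))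
    filter_upwards [self_mem_nhdsWithin] with y hy
    exact (hGy y hy).symm
  rw [sub_self] at h4
  exact leftLim_eq_of_tendsto h4

lemma vanish_pos (hi : Integrable (fun z : ℝ => z) μ) [IsFiniteMeasure μ] {x : ℝ}
    (hx : 0 < x) (h0 : ∫ z in Set.Ioo 0 x, z ∂μ = mTot μ) : μ (Set.Ici x) = 0 := by
  have hdisj : Disjoint (Set.Ioo (0:ℝ) x) (Set.Ici x) := by
    rw [Set.disjoint_left]
    rintro z ⟨_, h1⟩ h2
    exact absurd h2 (not_le.2 h1)
  have hU : Set.Ioo (0:ℝ) x ∪ Set.Ici x = Set.Ioi 0 := by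
    ext z
    simp only [Set.mem_union, Set.mem_Ioo, Set.mem_Ici, Set.mem_Ioi]
    constructor
    · rintro (⟨h, _⟩ | h)
      · exact h
      · linarith
    · intro h
      rcases lt_or_ge z x with h' | h'
      · exact Or.inl ⟨h, h'⟩
      · exact Or.inr h'
  have hsplit : ∫ z in Set.Ioi (0:ℝ), z ∂μ
      = ∫ z in Set.Ioo (0:ℝ) x, z ∂μ + ∫ z in Set.Ici x, z ∂μ := by
    rw [← hU]
    exact setIntegral_union hdisj measurableSet_Ici hi.integrableOn hi.integrableOn
  have h1 : ∫ z in Set.Ici x, z ∂μ = 0 := by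
    have : mTot μ = ∫ z in Set.Ioi (0:ℝ), z ∂μ := rfl
    rw [h0] at hsplit
    linarith [hsplit, this]
  have h2 := setIntegral_ge_of_const_le (μ := μ) (f := fun z : ℝ => z) (c := x)
    measurableSet_Ici (measure_ne_top μ _) (fun z hz => hz) hi.integrableOn
  rw [h1, smul_eq_mul, measureReal_def] at h2
  have h3 : (μ (Set.Ici x)).toReal = 0 := by
    nlinarith [ENNReal.toReal_nonneg (a := μ (Set.Ici x))]
  rcases (ENNReal.toReal_eq_zero_iff _).1 h3 with h | h
  · exact h
  · exact absurd h (measure_ne_top μ _)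

lemma vanish_neg (hi : Integrable (fun z : ℝ => z) μ) [IsFiniteMeasure μ] {x : ℝ}
    (hx : x < 0) (h0 : ∫ z in Set.Ioo x 0, -z ∂μ = ∫ z in Set.Iio (0:ℝ), -z ∂μ) :
    μ (Set.Iic x) = 0 := by
  have hdisj : Disjoint (Set.Iic x) (Set.Ioo x (0:ℝ)) := by
    rw [Set.disjoint_left]
    rintro z h1 ⟨h2, _⟩
    exact absurd h1 (not_le.2 h2)
  have hU : Set.Iic x ∪ Set.Ioo x (0:ℝ) = Set.Iio 0 := by
    ext z
    simp only [Set.mem_union, Set.mem_Ioo, Set.mem_Iic, Set.mem_Iio]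
    constructor
    · rintro (h | ⟨_, h⟩)
      · linarith
      · exact h
    · intro h
      rcases le_or_gt z x with h' | h'
      · exact Or.inl h'
      · exact Or.inr ⟨h', h⟩
  have hsplit : ∫ z in Set.Iio (0:ℝ), -z ∂μ
      = ∫ z in Set.Iic x, -z ∂μ + ∫ z in Set.Ioo x (0:ℝ), -z ∂μ := by
    rw [← hU]
    exact setIntegral_union hdisj measurableSet_Ioo hi.neg.integrableOn hi.neg.integrableOn
  have h1 : ∫ z in Set.Iic x, -z ∂μ = 0 := by linarith [hsplit, h0]
  have h2 := setIntegral_ge_of_const_le (μ := μ) (f := fun z : ℝ => -z) (c := -x)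
    measurableSet_Iic (measure_ne_top μ _) (fun z hz => by
      show -x ≤ -z
      have : z ≤ x := hz
      linarith) hi.neg.integrableOn
  rw [h1, smul_eq_mul, measureReal_def] at h2
  have h3 : (μ (Set.Iic x)).toReal = 0 := by
    nlinarith [ENNReal.toReal_nonneg (a := μ (Set.Iic x))]
  rcases (ENNReal.toReal_eq_zero_iff _).1 h3 with h | h
  · exact h
  · exact absurd h (measure_ne_top μ _)

lemma exists_null_up (μ : Measure ℝ) :
    ∃ D : Set ℝ, MeasurableSet D ∧ {x : ℝ | 0 < x ∧ μ (Set.Ici x) = 0} ⊆ D ∧ μ D = 0 := by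
  set C := {x : ℝ | 0 < x ∧ μ (Set.Ici x) = 0} with hC
  rcases Set.eq_empty_or_nonempty C with h | h
  · exact ⟨∅, MeasurableSet.empty, by rw [h], measure_empty⟩
  · have hbdd : BddBelow C := ⟨0, fun y hy => hy.1.le⟩
    set s := sInf C with hs'
    have hIoi : μ (Set.Ioi s) = 0 := by
      have hsub : Set.Ioi s ⊆ ⋃ n : ℕ, Set.Ici (s + 1/((n:ℝ)+1)) := by
        intro z hz
        obtain ⟨n, hn⟩ := exists_nat_one_div_lt (sub_pos.2 (Set.mem_Ioi.1 hz))
        exact Set.mem_iUnion.2 ⟨n, by simp only [Set.mem_Ici]; linarith⟩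
      refine measure_mono_null hsub (measure_iUnion_null fun n => ?_)
      have hlt : s < s + 1/((n:ℝ)+1) := by
        have : (0:ℝ) < 1/((n:ℝ)+1) := by positivity
        linarith
      obtain ⟨y, hyC, hy⟩ := exists_lt_of_csInf_lt h hlt
      exact measure_mono_null (Set.Ici_subset_Ici.2 hy.le) hyC.2
    by_cases hs : s ∈ C
    · exact ⟨Set.Ici s, measurableSet_Ici, fun y hy => csInf_le hbdd hy, hs.2⟩
    · refine ⟨Set.Ioi s, measurableSet_Ioi, fun y hy => ?_, hIoi⟩
      rcases lt_or_eq_of_le (csInf_le hbdd hy) with h' | h'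
      · exact h'
      · exact absurd (show s ∈ C by rw [hs', h']; exact hy) hs

lemma exists_null_down (μ : Measure ℝ) :
    ∃ D : Set ℝ, MeasurableSet D ∧ {x : ℝ | x < 0 ∧ μ (Set.Iic x) = 0} ⊆ D ∧ μ D = 0 := by
  set C := {x : ℝ | x < 0 ∧ μ (Set.Iic x) = 0} with hC
  rcases Set.eq_empty_or_nonempty C with h | h
  · exact ⟨∅, MeasurableSet.empty, by rw [h], measure_empty⟩
  · have hbdd : BddAbove C := ⟨0, fun y hy => hy.1.le⟩
    set s := sSup C with hs'
    have hIio : μ (Set.Iio s) = 0 := by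
      have hsub : Set.Iio s ⊆ ⋃ n : ℕ, Set.Iic (s - 1/((n:ℝ)+1)) := by
        intro z hz
        obtain ⟨n, hn⟩ := exists_nat_one_div_lt (sub_pos.2 (Set.mem_Iio.1 hz))
        exact Set.mem_iUnion.2 ⟨n, by simp only [Set.mem_Iic]; linarith⟩
      refine measure_mono_null hsub (measure_iUnion_null fun n => ?_)
      have hlt : s - 1/((n:ℝ)+1) < s := by
        have : (0:ℝ) < 1/((n:ℝ)+1) := by positivity
        linarith
      obtain ⟨y, hyC, hy⟩ := exists_lt_of_lt_csSup h hlt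
      exact measure_mono_null (Set.Iic_subset_Iic.2 hy.le) hyC.2
    by_cases hs : s ∈ C
    · exact ⟨Set.Iic s, measurableSet_Iic, fun y hy => le_csSup hbdd hy, hs.2⟩
    · refine ⟨Set.Iio s, measurableSet_Iio, fun y hy => ?_, hIio⟩
      rcases lt_or_eq_of_le (le_csSup hbdd hy) with h' | h'
      · exact h'
      · exact absurd (show s ∈ C by rw [hs', ← h']; exact hy) hs

lemma m_eq (hi : Integrable (fun z : ℝ => z) μ) (hmean : ∫ z, z ∂μ = 0) :
    ∫ z in Set.Iio (0:ℝ), -z ∂μ = mTot μ := by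
  have h1 := integral_add_compl (μ := μ) (f := fun z : ℝ => z) (s := Set.Iio (0:ℝ)) measurableSet_Iio hi
  rw [Set.compl_Iio, hmean] at h1
  have hu : Set.Ici (0:ℝ) = {0} ∪ Set.Ioi 0 := by
    ext z
    simp only [Set.mem_Ici, Set.mem_union, Set.mem_singleton_iff, Set.mem_Ioi]
    constructor
    · intro h
      rcases eq_or_lt_of_le h with h' | h'
      · exact Or.inl h'.symm
      · exact Or.inr h'
    · rintro (rfl | h)
      · exact le_refl 0
      · exact h.le
  have hdisj : Disjoint ({(0:ℝ)} : Set ℝ) (Set.Ioi (0:ℝ)) := by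
    rw [Set.disjoint_left]
    rintro z rfl h
    exact lt_irrefl 0 (Set.mem_Ioi.1 h)
  have h2 : ∫ z in Set.Ici (0:ℝ), z ∂μ
      = ∫ z in ({(0:ℝ)} : Set ℝ), z ∂μ + ∫ z in Set.Ioi (0:ℝ), z ∂μ := by
    rw [hu]
    exact setIntegral_union hdisj measurableSet_Ioi hi.integrableOn hi.integrableOn
  have h3 : ∫ z in ({(0:ℝ)} : Set ℝ), z ∂μ = 0 := by
    rw [setIntegral_congr_fun (measurableSet_singleton (0:ℝ))
      (g := fun _ => (0:ℝ)) (fun z hz => hz)]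
    simp
  rw [h3, zero_add] at h2
  have h4 : ∫ z in Set.Iio (0:ℝ), -z ∂μ = -∫ z in Set.Iio (0:ℝ), z ∂μ := integral_neg _
  have : mTot μ = ∫ z in Set.Ioi (0:ℝ), z ∂μ := rfl
  rw [h4, this]
  linarith [h1, h2]

lemma pos_side (hi : Integrable (fun z : ℝ => z) μ) [IsProbabilityMeasure μ]
    (hme : ∫ z in Set.Iio (0:ℝ), -z ∂μ = mTot μ)
    {x u : ℝ} (hx : 0 ≤ x) (hu0 : 0 ≤ u) (hu1 : u < 1)
    (hxC : ¬ (0 < x ∧ μ (Set.Ici x) = 0)) :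
    xMinus μ (Gtilde μ x u) ≠ ⊤ ∧ xMinus μ (Gtilde μ x u) ≠ ⊥ := by
  constructor
  · have hle : xMinus μ (Gtilde μ x u) ≤ 0 := sSup_le fun y hy => hy.1
    exact ne_top_of_le_ne_top EReal.zero_lt_top.ne hle
  · suffices h : ∃ y : ℝ, y ≤ 0 ∧ Gtilde μ x u ≤ G μ y by
      obtain ⟨y, hy0, hyG⟩ := h
      have hmem : (y : EReal) ∈ {a : EReal | a ≤ 0 ∧ Gbar μ a ≥ Gtilde μ x u} := by
        constructor
        · exact_mod_cast hy0
        · rw [Gbar_coe]; exact hyG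
      have hle := le_sSup hmem
      intro hbot
      rw [xMinus] at hbot
      rw [hbot] at hle
      exact (EReal.coe_ne_bot y) (le_bot_iff.1 hle)
    by_cases hh : Gtilde μ x u ≤ 0
    · exact ⟨0, le_rfl, by rw [G_zero]; exact hh⟩
    push_neg at hh
    have hx0 : x ≠ 0 := by
      rintro rfl
      rw [Gtilde, if_pos le_rfl, leftLim_G_zero hi, G_zero] at hh
      simp at hh
    have hxpos : 0 < x := lt_of_le_of_ne hx (Ne.symm hx0)
    set L := Function.leftLim (G μ) x with hLdef
    have hLval : L = ∫ z in Set.Ioo 0 x, z ∂μ := leftLim_G_pos hi hxpos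
    have hLle : L ≤ mTot μ := by rw [hLval]; exact intOoo_le hi x
    have hLne : L ≠ mTot μ := fun hc => hxC ⟨hxpos, vanish_pos hi hxpos (hLval ▸ hc)⟩
    have hGxle : G μ x ≤ mTot μ := by rw [G_of_nonneg μ hx]; exact Gp_le hi x
    have hform : Gtilde μ x u = (1-u)*L + u * G μ x := by
      rw [Gtilde, if_pos hx, ← hLdef]; ring
    have hlt : Gtilde μ x u < mTot μ := by
      rw [hform]
      have hlt1 : (1-u)*L < (1-u)*mTot μ :=
        mul_lt_mul_of_pos_left (lt_of_le_of_ne hLle hLne) (by linarith)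
      have hlt2 : u * G μ x ≤ u * mTot μ := mul_le_mul_of_nonneg_left hGxle hu0
      nlinarith
    rw [← hme] at hlt
    obtain ⟨n, hn⟩ := ((tendsto_G_neg hi).eventually (eventually_gt_nhds hlt)).exists
    refine ⟨-(n:ℝ) - 1, ?_, hn.le⟩
    have : (0:ℝ) ≤ n := Nat.cast_nonneg n
    linarith

lemma neg_side (hi : Integrable (fun z : ℝ => z) μ) [IsProbabilityMeasure μ]
    (hme : ∫ z in Set.Iio (0:ℝ), -z ∂μ = mTot μ)
    {x u : ℝ} (hx : x < 0) (hu0 : 0 ≤ u) (hu1 : u < 1)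
    (hxC : ¬ (x < 0 ∧ μ (Set.Iic x) = 0)) :
    xPlus μ (Gtilde μ x u) ≠ ⊤ ∧ xPlus μ (Gtilde μ x u) ≠ ⊥ := by
  constructor
  · suffices h : ∃ y : ℝ, 0 ≤ y ∧ Gtilde μ x u ≤ G μ y by
      obtain ⟨y, hy0, hyG⟩ := h
      have hmem : (y : EReal) ∈ {a : EReal | 0 ≤ a ∧ Gbar μ a ≥ Gtilde μ x u} := by
        constructor
        · exact_mod_cast hy0
        · rw [Gbar_coe]; exact hyG
      have hle := sInf_le hmem
      intro htop
      rw [xPlus] at htop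
      rw [htop] at hle
      exact (EReal.coe_ne_top y) (top_le_iff.1 hle)
    by_cases hh : Gtilde μ x u ≤ 0
    · exact ⟨0, le_rfl, by rw [G_zero]; exact hh⟩
    push_neg at hh
    set R := Function.rightLim (G μ) x with hRdef
    have hRval : R = ∫ z in Set.Ioo x 0, -z ∂μ := rightLim_G_neg hi hx
    have hRle : R ≤ mTot μ := by rw [hRval, ← hme]; exact intOoo_le' hi x
    have hRne : R ≠ mTot μ := fun hc => hxC ⟨hx, vanish_neg hi hx (by rw [← hRval, hc, hme])⟩
    have hGxle : G μ x ≤ mTot μ := by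
      rw [G_of_neg μ (not_le.2 hx), ← hme]; exact Gm_le hi x
    have hform : Gtilde μ x u = (1-u)*R + u * G μ x := by
      rw [Gtilde, if_neg (not_le.2 hx), ← hRdef]; ring
    have hlt : Gtilde μ x u < mTot μ := by
      rw [hform]
      have hlt1 : (1-u)*R < (1-u)*mTot μ :=
        mul_lt_mul_of_pos_left (lt_of_le_of_ne hRle hRne) (by linarith)
      have hlt2 : u * G μ x ≤ u * mTot μ := mul_le_mul_of_nonneg_left hGxle hu0
      nlinarith
    obtain ⟨n, hn⟩ := ((tendsto_G_pos hi).eventually (eventually_gt_nhds hlt)).exists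
    refine ⟨(n:ℝ) + 1, ?_, hn.le⟩
    have : (0:ℝ) ≤ n := Nat.cast_nonneg n
    linarith
  · have hle : (0:EReal) ≤ xPlus μ (Gtilde μ x u) := le_sInf fun y hy => hy.1
    intro hbot
    rw [hbot] at hle
    exact absurd (le_bot_iff.1 hle) (by simp)

end RecipAux

/-- Almost surely, `|r(X,U)| < ∞`. -/
theorem recip_ae_finite
    {Ω : Type*} [MeasurableSpace Ω] (P : Measure Ω) [IsProbabilityMeasure P]
    (X U : Ω → ℝ) (hX : Measurable X) (hU : Measurable U)
    (hindep : IndepFun X U P)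
    (hUunif : Measure.map U P = volume.restrict (Set.Icc (0:ℝ) 1))
    (hint : Integrable X P) (hmean : ∫ ω, X ω ∂P = 0) :
    ∀ᵐ ω ∂P, recip (Measure.map X P) (X ω) (U ω) ≠ ⊤ ∧
             recip (Measure.map X P) (X ω) (U ω) ≠ ⊥ := by
  set μ := Measure.map X P with hμ
  haveI : IsProbabilityMeasure μ := Measure.isProbabilityMeasure_map hX.aemeasurable
  have hi : Integrable (fun z : ℝ => z) μ :=
    (integrable_map_measure aestronglyMeasurable_id hX.aemeasurable).2 hint
  have hmean' : ∫ z, z ∂μ = 0 :=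
    (integral_map hX.aemeasurable aestronglyMeasurable_id).trans hmean
  have hme : ∫ z in Set.Iio (0:ℝ), -z ∂μ = mTot μ := RecipAux.m_eq hi hmean'
  obtain ⟨D1, hD1m, hD1s, hD1⟩ := RecipAux.exists_null_up μ
  obtain ⟨D2, hD2m, hD2s, hD2⟩ := RecipAux.exists_null_down μ
  have hXD : ∀ᵐ ω ∂P, X ω ∉ D1 ∧ X ω ∉ D2 := by
    have h1 : P (X ⁻¹' (D1 ∪ D2)) = 0 := by
      rw [← Measure.map_apply hX (hD1m.union hD2m)]
      exact measure_union_null hD1 hD2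
    refine (measure_eq_zero_iff_ae_notMem.1 h1).mono fun ω hω => ?_
    exact ⟨fun h => hω (Or.inl h), fun h => hω (Or.inr h)⟩
  have hUae : ∀ᵐ ω ∂P, (0 ≤ U ω ∧ U ω ≤ 1) ∧ U ω ≠ 1 := by
    have hs : MeasurableSet ((Set.Icc (0:ℝ) 1)ᶜ ∪ {1}) :=
      measurableSet_Icc.compl.union (measurableSet_singleton 1)
    have h1 : P (U ⁻¹' ((Set.Icc (0:ℝ) 1)ᶜ ∪ {1})) = 0 := by
      rw [← Measure.map_apply hU hs, hUunif, Measure.restrict_apply hs]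
      have hinter : ((Set.Icc (0:ℝ) 1)ᶜ ∪ {1}) ∩ Set.Icc 0 1 = {1} := by
        ext z
        simp only [Set.mem_inter_iff, Set.mem_union, Set.mem_compl_iff,
          Set.mem_singleton_iff, Set.mem_Icc]
        constructor
        · rintro ⟨h | h, h2⟩
          · exact absurd h2 h
          · exact h
        · rintro rfl
          exact ⟨Or.inr rfl, by norm_num⟩
      rw [hinter]
      exact Real.volume_singleton
    refine (measure_eq_zero_iff_ae_notMem.1 h1).mono fun ω hω => ?_
    constructor
    · by_contra hc
      exact hω (Or.inl fun h => hc ⟨h.1, h.2⟩)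
    · intro hc
      exact hω (Or.inr hc)
  filter_upwards [hXD, hUae] with ω hXω hUω
  by_cases hx : 0 ≤ X ω
  · have h := RecipAux.pos_side hi hme hx hUω.1.1
      (lt_of_le_of_ne hUω.1.2 hUω.2) (fun hc => hXω.1 (hD1s hc))
    simp only [recip, if_pos hx]
    exact h
  · have hx' : X ω < 0 := not_le.1 hx
    have h := RecipAux.neg_side hi hme hx' hUω.1.1
      (lt_of_le_of_ne hUω.1.2 hUω.2) (fun hc => hXω.2 (hD2s hc))
    simp only [recip, if_neg hx]
    exact h
end
end
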